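/- arXiv:2502.13813 — 3 statements merged into one kernel-verified Lean document; each statement's English description precedes it below -/
import Mathlib

section
/- Assume I(Y;Ỹ) > 0. Then liminf_{n→∞} (n/log n)·P*_n ≥ 2·min{β, 1/I(Y;Ỹ)}. -/
open Filter Real

section

variable {𝒳 𝒴 : Type*} [Fintype 𝒳] [Fintype 𝒴] [Nonempty 𝒳] [Nonempty 𝒴]

/-- `p` is a probability mass function on a finite alphabet. -/
def IsPmf {α : Type*} [Fintype α] (p : α → ℝ) : Prop := (∀ a, 0 ≤ p a) ∧ ∑ a, p a = 1

/-- The output marginal `P_Y` of the source `PX` through the channel `W`. -/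
noncomputable def margY (PX : 𝒳 → ℝ) (W : 𝒳 → 𝒴 → ℝ) (y : 𝒴) : ℝ := ∑ x, PX x * W x y

/-- The joint pmf `P_{Y Ỹ}` of two independent noisy observations of the same source symbol. -/
noncomputable def jointYY (PX : 𝒳 → ℝ) (W : 𝒳 → 𝒴 → ℝ) (y y2 : 𝒴) : ℝ :=
  ∑ x, PX x * W x y * W x y2

/-- The likelihood ratio `λ(y, y2)`. -/
noncomputable def lam (PX : 𝒳 → ℝ) (W : 𝒳 → 𝒴 → ℝ) (y y2 : 𝒴) : ℝ :=
  if 0 < margY PX W y * margY PX W y2 then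
    jointYY PX W y y2 / (margY PX W y * margY PX W y2) else 0

/-- The mutual information `I(Y; Ỹ)`. -/
noncomputable def mutInf (PX : 𝒳 → ℝ) (W : 𝒳 → 𝒴 → ℝ) : ℝ :=
  ∑ y : 𝒴, ∑ y2 : 𝒴,
    if 0 < jointYY PX W y y2 then jointYY PX W y y2 * Real.log (lam PX W y y2) else 0

/-- Safe indexing into a tuple. -/
noncomputable def idx {α : Type*} [Nonempty α] {m : ℕ} (x : Fin m → α) (i : ℕ) : α :=
  if h : i < m then x ⟨i, h⟩ else Classical.arbitrary α

/-- Conditional law of the pair of reads given a positive overlap `s`: the reads are noisy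
observations (through `W`) of two length-`L` windows of an i.i.d. `PX`-sequence whose starting
points are `L - s` apart. -/
noncomputable def condPos (PX : 𝒳 → ℝ) (W : 𝒳 → 𝒴 → ℝ) (L s : ℕ)
    (y₁ y₂ : Fin L → 𝒴) : ℝ :=
  ∑ x : Fin (2 * L) → 𝒳,
    (∏ j, PX (x j)) *
      ((∏ i : Fin L, W (idx x (i : ℕ)) (y₁ i)) *
        (∏ i : Fin L, W (idx x (L - s + (i : ℕ))) (y₂ i)))

/-- Conditional law of the pair of reads given the overlap `t`. -/
noncomputable def condLik (PX : 𝒳 → ℝ) (W : 𝒳 → 𝒴 → ℝ) (L : ℕ) (t : ℤ)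
    (y₁ y₂ : Fin L → 𝒴) : ℝ :=
  if 1 ≤ t ∧ t ≤ (L : ℤ) then condPos PX W L t.toNat y₁ y₂
  else if 1 - (L : ℤ) ≤ t ∧ t ≤ -1 then condPos PX W L (-t).toNat y₂ y₁
  else if t = 0 then (∏ i, margY PX W (y₁ i)) * (∏ i, margY PX W (y₂ i))
  else 0

/-- The read length `ℓ(n) = ⌈β log n⌉`. -/
noncomputable def ell (β : ℝ) (n : ℕ) : ℕ := ⌈β * Real.log n⌉₊

/-- The prior pmf of the overlap `T`. -/
noncomputable def priorT (n L : ℕ) (t : ℤ) : ℝ :=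
  if t = 0 then ((n : ℝ) - (2 * (L : ℝ) - 1)) / n
  else if t ∈ Finset.Icc (1 - (L : ℤ)) ((L : ℤ)) then (n : ℝ)⁻¹
  else 0

/-- Bayesian error probability of the detector `That` in the noisy setting. -/
noncomputable def errProbN (PX : 𝒳 → ℝ) (W : 𝒳 → 𝒴 → ℝ) (n L : ℕ)
    (That : (Fin L → 𝒴) → (Fin L → 𝒴) → ℤ) : ℝ :=
  ∑ t ∈ Finset.Icc (1 - (L : ℤ)) ((L : ℤ)), ∑ y₁ : Fin L → 𝒴, ∑ y₂ : Fin L → 𝒴,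
    if That y₁ y₂ ≠ t then priorT n L t * condLik PX W L t y₁ y₂ else 0

/-- Minimal Bayesian error probability over all detectors with values in `𝒯`. -/
noncomputable def PstarN (PX : 𝒳 → ℝ) (W : 𝒳 → 𝒴 → ℝ) (β : ℝ) (n : ℕ) : ℝ :=
  sInf {e : ℝ | ∃ That : (Fin (ell β n) → 𝒴) → (Fin (ell β n) → 𝒴) → ℤ,
    (∀ y₁ y₂, That y₁ y₂ ∈ Finset.Icc (1 - (ell β n : ℤ)) ((ell β n : ℤ))) ∧
    e = errProbN PX W n (ell β n) That}

/-!
The detector has to pick one overlap, so for every `t ≠ 0` it loses at least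
`∑ min (P_T(t) P(y | t), P_T(0) P(y | 0))`. For `|t| = s` the likelihood ratio of overlap `s`
against independent reads is the product of `λ` over the `s` overlapping symbol pairs, whose
information densities `log λ` are i.i.d. under `P_{YỸ}` with mean `I` and variance `V`. The prior
odds of `T = 0` against `T = t` are about `n`, so as long as `s I ≤ (1 - ε) log n` Chebyshev's
inequality keeps the log-likelihood ratio below `log n` with probability `1 - O(1 / log n)`, and
`t` costs about `1 / n`. There are about `2 min (ℓ, log n / I)` such overlaps, whence
`P*_n ≳ 2 min (β, 1 / I) log n / n`.
-/

set_option linter.unusedSectionVars false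

section ProductPmf

open Finset

theorem sum_filter_lt_le_sum_mul_sq_div {ι : Type*} (s : Finset ι) {p X : ι → ℝ}
    (hp : ∀ i ∈ s, 0 ≤ p i) {μ a : ℝ} (ha : μ < a) :
    ∑ i ∈ s with a < X i, p i ≤ (∑ i ∈ s, p i * (X i - μ) ^ 2) / (a - μ) ^ 2 := by
  rw [le_div_iff₀ (by nlinarith), sum_filter, sum_mul]
  refine sum_le_sum fun i hi => ?_
  split_ifs with h
  · exact mul_le_mul_of_nonneg_left (pow_le_pow_left₀ (by linarith) (by linarith) 2) (hp i hi)
  · rw [zero_mul]; exact mul_nonneg (hp i hi) (sq_nonneg _)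

variable {β : Type*} [Fintype β] {q : β → ℝ} {s : ℕ}

theorem sum_pi_prod_mul_prod (g : Fin s → β → ℝ) :
    ∑ v : Fin s → β, (∏ k, q (v k)) * ∏ k, g k (v k) = ∏ k, ∑ b, q b * g k b := by
  simp_rw [← prod_mul_distrib]
  exact (Fintype.prod_sum fun k b => q b * g k b).symm

theorem sum_pi_prod_mul_apply (hq : ∑ b, q b = 1) (i : Fin s) (f : β → ℝ) :
    ∑ v : Fin s → β, (∏ k, q (v k)) * f (v i) = ∑ b, q b * f b := by
  have h := sum_pi_prod_mul_prod (q := q) fun k b => if k = i then f b else 1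
  simp only [prod_ite_eq', mem_univ, if_true] at h
  rw [h, Fintype.prod_eq_single i fun k hk => by simp [hk, hq]]
  simp

theorem sum_pi_prod_mul_apply_mul_apply (hq : ∑ b, q b = 1) {i j : Fin s} (hij : i ≠ j)
    (f g : β → ℝ) :
    ∑ v : Fin s → β, (∏ k, q (v k)) * (f (v i) * g (v j)) = (∑ b, q b * f b) * ∑ b, q b * g b := by
  have h := sum_pi_prod_mul_prod (q := q) fun k b =>
    (if k = i then f b else 1) * if k = j then g b else 1
  simp only [prod_mul_distrib, prod_ite_eq', mem_univ, if_true] at h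
  rw [h, prod_eq_mul i j hij (fun k _ hk => by simp [hk.1, hk.2, hq]) (by simp) (by simp)]
  simp [hij, Ne.symm hij]

theorem sum_pi_prod_mul_sq_sum (hq : ∑ b, q b = 1) {f : β → ℝ} (hf : ∑ b, q b * f b = 0) :
    ∑ v : Fin s → β, (∏ k, q (v k)) * (∑ i, f (v i)) ^ 2 = s * ∑ b, q b * f b ^ 2 := by
  have hpair : ∀ i j : Fin s, ∑ v : Fin s → β, (∏ k, q (v k)) * (f (v i) * f (v j))
      = if i = j then ∑ b, q b * f b ^ 2 else 0 := by
    intro i j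
    split_ifs with hij
    · subst hij
      simpa only [← sq] using sum_pi_prod_mul_apply hq i (fun b => f b ^ 2)
    · rw [sum_pi_prod_mul_apply_mul_apply hq hij, hf, zero_mul]
  calc ∑ v : Fin s → β, (∏ k, q (v k)) * (∑ i, f (v i)) ^ 2
      = ∑ i, ∑ j, ∑ v : Fin s → β, (∏ k, q (v k)) * (f (v i) * f (v j)) := by
        simp_rw [sq, sum_mul_sum, mul_sum]
        rw [sum_comm]
        exact sum_congr rfl fun i _ => sum_comm
    _ = s * ∑ b, q b * f b ^ 2 := by simp [hpair]

theorem sum_pi_filter_lt_prod_le (hq0 : ∀ b, 0 ≤ q b) (hq : ∑ b, q b = 1) (Z : β → ℝ) {a : ℝ}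
    (ha : s * ∑ b, q b * Z b < a) :
    ∑ v : Fin s → β with a < ∑ i, Z (v i), ∏ k, q (v k)
      ≤ s * (∑ b, q b * (Z b - ∑ b, q b * Z b) ^ 2) / (a - s * ∑ b, q b * Z b) ^ 2 := by
  set m := ∑ b, q b * Z b
  have hcentred : ∑ b, q b * (Z b - m) = 0 := by
    simp [mul_sub, sum_sub_distrib, ← sum_mul, hq, m]
  have hsum : ∀ v : Fin s → β, ∑ i, Z (v i) - s * m = ∑ i, (Z (v i) - m) := by
    simp [sum_sub_distrib]
  refine (sum_filter_lt_le_sum_mul_sq_div _ (fun _ _ => prod_nonneg fun _ _ => hq0 _)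
    ha).trans_eq ?_
  simp_rw [hsum, sum_pi_prod_mul_sq_sum hq hcentred]

end ProductPmf

section Tuples

open Finset

theorem idx_eq {α : Type*} [Nonempty α] {m : ℕ} (x : Fin m → α) {i : ℕ} (h : i < m) :
    idx x i = x ⟨i, h⟩ := dif_pos h

theorem sum_prod_idx {α : Type*} [Fintype α] [Nonempty α] (L : ℕ) (c : ℕ → α → ℝ) :
    ∑ v : Fin L → α, ∏ i ∈ range L, c i (idx v i) = ∏ i ∈ range L, ∑ a, c i a := by
  simp_rw [← Fin.prod_univ_eq_prod_range, fun (v : Fin L → α) (i : Fin L) => idx_eq v i.isLt]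
  exact (Fintype.prod_sum fun (i : Fin L) a => c i a).symm

theorem prod_idx_eq_prod_range_mul {α : Type*} [Nonempty α] {L : ℕ} (f : α → ℝ) (y : Fin L → α)
    {a b : ℕ} (h : a + b = L) :
    ∏ i, f (y i) = (∏ j ∈ range a, f (idx y j)) * ∏ j ∈ range b, f (idx y (a + j)) := by
  rw [← prod_range_add, h, ← Fin.prod_univ_eq_prod_range]
  exact prod_congr rfl fun i _ => by rw [idx_eq y i.isLt]

theorem sum_prod_idx_mul_prod_idx {α : Type*} [Fintype α] [Nonempty α] {a b L : ℕ}
    (hL : a + b = L) (c₁ c₂ : ℕ → α → ℝ) :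
    ∑ v : Fin L → α, (∏ j ∈ range a, c₁ j (idx v j)) * ∏ i ∈ range b, c₂ i (idx v (a + i))
      = (∏ j ∈ range a, ∑ x, c₁ j x) * ∏ i ∈ range b, ∑ x, c₂ i x := by
  subst hL
  set c : ℕ → α → ℝ := fun j x => if j < a then c₁ j x else c₂ (j - a) x
  have hc₁ : ∀ j ∈ range a, c j = c₁ j := fun j hj => by simp [c, mem_range.1 hj]
  have hc₂ : ∀ i, c (a + i) = c₂ i := fun i => by simp [c]
  have hsplit : ∀ v : Fin (a + b) → α,
      (∏ j ∈ range a, c₁ j (idx v j)) * ∏ i ∈ range b, c₂ i (idx v (a + i))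
        = ∏ j ∈ range (a + b), c j (idx v j) := fun v => by
    rw [prod_range_add, prod_congr rfl fun j hj => congrFun (hc₁ j hj) _]
    simp only [hc₂]
  simp_rw [hsplit, sum_prod_idx, prod_range_add, hc₂]
  rw [prod_congr rfl fun j hj => by rw [hc₁ j hj]]

theorem prod_range_ite_idx_eq {α : Type*} [Nonempty α] [DecidableEq α] {s : ℕ} (w v : Fin s → α) :
    ∏ i ∈ range s, (if idx w i = idx v i then (1 : ℝ) else 0) = if w = v then 1 else 0 := by
  rw [prod_boole]
  congr 1
  refine propext ⟨fun h => funext fun i => ?_, fun h i _ => h ▸ rfl⟩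
  simpa [idx_eq _ i.isLt] using h i (mem_range.2 i.isLt)

end Tuples

section Channel

open Finset

variable {PX : 𝒳 → ℝ} {W : 𝒳 → 𝒴 → ℝ}

theorem margY_nonneg (hPX : IsPmf PX) (hW : ∀ x, IsPmf (W x)) (y : 𝒴) : 0 ≤ margY PX W y :=
  sum_nonneg fun x _ => mul_nonneg (hPX.1 x) ((hW x).1 y)

theorem sum_margY (hPX : IsPmf PX) (hW : ∀ x, IsPmf (W x)) : ∑ y, margY PX W y = 1 := by
  simp only [margY]
  rw [sum_comm]
  simp [← mul_sum, (hW _).2, hPX.2]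

theorem jointYY_nonneg (hPX : IsPmf PX) (hW : ∀ x, IsPmf (W x)) (y y₂ : 𝒴) :
    0 ≤ jointYY PX W y y₂ :=
  sum_nonneg fun x _ => mul_nonneg (mul_nonneg (hPX.1 x) ((hW x).1 y)) ((hW x).1 y₂)

theorem jointYY_comm (y y₂ : 𝒴) : jointYY PX W y y₂ = jointYY PX W y₂ y := by
  simp only [jointYY, mul_right_comm]

theorem sum_jointYY_right (hW : ∀ x, IsPmf (W x)) (y : 𝒴) :
    ∑ y₂, jointYY PX W y y₂ = margY PX W y := by
  simp only [jointYY, margY]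
  rw [sum_comm]
  simp [← mul_sum, (hW _).2]

theorem sum_jointYY (hPX : IsPmf PX) (hW : ∀ x, IsPmf (W x)) :
    ∑ z : 𝒴 × 𝒴, jointYY PX W z.1 z.2 = 1 := by
  rw [Fintype.sum_prod_type]
  simp [sum_jointYY_right hW, sum_margY hPX hW]

theorem jointYY_le_margY (hPX : IsPmf PX) (hW : ∀ x, IsPmf (W x)) (y y₂ : 𝒴) :
    jointYY PX W y y₂ ≤ margY PX W y := by
  rw [← sum_jointYY_right hW]
  exact single_le_sum (f := jointYY PX W y) (fun _ _ => jointYY_nonneg hPX hW _ _) (mem_univ y₂)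

-- `lam` is `0` where a marginal vanishes, but then so does the joint pmf.
theorem jointYY_eq_lam_mul (hPX : IsPmf PX) (hW : ∀ x, IsPmf (W x)) (y y₂ : 𝒴) :
    jointYY PX W y y₂ = lam PX W y y₂ * (margY PX W y * margY PX W y₂) := by
  unfold lam
  split_ifs with h
  · exact (div_mul_cancel₀ _ h.ne').symm
  · rw [zero_mul]
    rcases (mul_nonneg (margY_nonneg hPX hW y) (margY_nonneg hPX hW y₂)).eq_or_lt' with h0 | h0
    · rcases mul_eq_zero.1 h0 with h0 | h0
      · exact le_antisymm (h0 ▸ jointYY_le_margY hPX hW y y₂) (jointYY_nonneg hPX hW y y₂)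
      · exact le_antisymm (h0 ▸ jointYY_comm (PX := PX) y₂ y ▸ jointYY_le_margY hPX hW y₂ y)
          (jointYY_nonneg hPX hW y y₂)
    · exact absurd h0 h

theorem mutInf_eq_sum (hPX : IsPmf PX) (hW : ∀ x, IsPmf (W x)) :
    mutInf PX W = ∑ z : 𝒴 × 𝒴, jointYY PX W z.1 z.2 * log (lam PX W z.1 z.2) := by
  rw [Fintype.sum_prod_type]
  refine sum_congr rfl fun y _ => sum_congr rfl fun y₂ _ => ?_
  split_ifs with h
  · rfl
  · simp [(not_lt.1 h).antisymm (jointYY_nonneg hPX hW y y₂)]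

end Channel

section Reads

open Finset

variable {PX : 𝒳 → ℝ} {W : 𝒳 → 𝒴 → ℝ}

/-- The factor of `condPos` contributed by the source symbol `a` at position `j`: read 1 observes
the positions `[0, L)`, read 2 the positions `[L - s, 2L - s)`. -/
noncomputable def siteWeight (PX : 𝒳 → ℝ) (W : 𝒳 → 𝒴 → ℝ) (L s : ℕ) (y₁ y₂ : Fin L → 𝒴)
    (j : ℕ) (a : 𝒳) : ℝ :=
  PX a * (if j < L then W a (idx y₁ j) else 1) *
    if L - s ≤ j ∧ j < 2 * L - s then W a (idx y₂ (j - (L - s))) else 1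

theorem condPos_eq_prod_sum_siteWeight (PX : 𝒳 → ℝ) (W : 𝒳 → 𝒴 → ℝ) {L s : ℕ} (hs : s ≤ L)
    (y₁ y₂ : Fin L → 𝒴) :
    condPos PX W L s y₁ y₂ = ∏ j ∈ range (2 * L), ∑ a, siteWeight PX W L s y₁ y₂ j a := by
  rw [← sum_prod_idx]
  refine sum_congr rfl fun x _ => ?_
  have hread₁ : (range (2 * L)).filter (· < L) = range L := by ext; simp; omega
  have hread₂ : (range (2 * L)).filter (fun j => L - s ≤ j ∧ j < 2 * L - s)
      = Ico (L - s) (L - s + L) := by ext; simp; omega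
  simp only [siteWeight, prod_mul_distrib, ← prod_filter, hread₁, hread₂, prod_Ico_eq_prod_range,
    Nat.add_sub_cancel_left, ← Fin.prod_univ_eq_prod_range (fun j => PX (idx x j)),
    ← Fin.prod_univ_eq_prod_range (fun j => W (idx x j) (idx y₁ j)),
    ← Fin.prod_univ_eq_prod_range (fun j => W (idx x (L - s + j)) (idx y₂ j)),
    idx_eq _ (Fin.is_lt _), Fin.eta, mul_assoc]

theorem condPos_eq (hPX : IsPmf PX) {L s : ℕ} (hs : s ≤ L) (y₁ y₂ : Fin L → 𝒴) :
    condPos PX W L s y₁ y₂ =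
      (∏ j ∈ range (L - s), margY PX W (idx y₁ j)) *
        ((∏ i ∈ range s, jointYY PX W (idx y₁ (L - s + i)) (idx y₂ i)) *
          ∏ i ∈ range (L - s), margY PX W (idx y₂ (s + i))) := by
  rw [condPos_eq_prod_sum_siteWeight PX W hs, show 2 * L = L - s + (s + (L - s + s)) by omega,
    prod_range_add, prod_range_add, prod_range_add]
  have hprefix : ∀ j ∈ range (L - s), ∑ a, siteWeight PX W L s y₁ y₂ j a
      = margY PX W (idx y₁ j) := fun j hj => by
    simp only [mem_range] at hj
    simp [siteWeight, margY, show j < L by omega, show ¬(L - s ≤ j) by omega]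
  have hoverlap : ∀ i ∈ range s, ∑ a, siteWeight PX W L s y₁ y₂ (L - s + i) a
      = jointYY PX W (idx y₁ (L - s + i)) (idx y₂ i) := fun i hi => by
    simp only [mem_range] at hi
    simp [siteWeight, jointYY, show L - s + i < L by omega, show L - s + i < 2 * L - s by omega]
  have hsuffix : ∀ i ∈ range (L - s), ∑ a, siteWeight PX W L s y₁ y₂ (L - s + (s + i)) a
      = margY PX W (idx y₂ (s + i)) := fun i hi => by
    simp only [mem_range] at hi
    simp [siteWeight, margY, show ¬(L - s + (s + i) < L) by omega,
      show L - s + (s + i) < 2 * L - s by omega]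
  have hunread : ∀ i ∈ range s,
      ∑ a, siteWeight PX W L s y₁ y₂ (L - s + (s + (L - s + i))) a = 1 := fun i hi => by
    simp only [mem_range] at hi
    simp [siteWeight, show ¬(L - s + (s + (L - s + i)) < L) by omega,
      show ¬(L - s + (s + (L - s + i)) < 2 * L - s) by omega, hPX.2]
  rw [prod_congr rfl hprefix, prod_congr rfl hoverlap, prod_congr rfl hsuffix,
    prod_congr rfl hunread, prod_const_one, mul_one]

noncomputable def overlapPair (L s : ℕ) (y₁ y₂ : Fin L → 𝒴) (i : ℕ) : 𝒴 × 𝒴 :=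
  (idx y₁ (L - s + i), idx y₂ i)

theorem condLik_zero (PX : 𝒳 → ℝ) (W : 𝒳 → 𝒴 → ℝ) (L : ℕ) (y₁ y₂ : Fin L → 𝒴) :
    condLik PX W L 0 y₁ y₂ = (∏ i, margY PX W (y₁ i)) * ∏ i, margY PX W (y₂ i) := by
  simp [condLik]

theorem condPos_eq_condLik_zero_mul_prod_lam (hPX : IsPmf PX) (hW : ∀ x, IsPmf (W x))
    {L s : ℕ} (hs : s ≤ L) (y₁ y₂ : Fin L → 𝒴) :
    condPos PX W L s y₁ y₂
      = condLik PX W L 0 y₁ y₂ *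
          ∏ i ∈ range s, lam PX W (overlapPair L s y₁ y₂ i).1 (overlapPair L s y₁ y₂ i).2 := by
  simp only [overlapPair]
  rw [condPos_eq hPX hs, condLik_zero, prod_idx_eq_prod_range_mul _ y₁ (Nat.sub_add_cancel hs),
    prod_idx_eq_prod_range_mul _ y₂ (Nat.add_sub_cancel' hs)]
  simp_rw [jointYY_eq_lam_mul hPX hW, prod_mul_distrib]
  ring

theorem sum_condPos_mul_prod (hPX : IsPmf PX) (hW : ∀ x, IsPmf (W x)) {L s : ℕ} (hs : s ≤ L)
    (g : ℕ → 𝒴 × 𝒴 → ℝ) :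
    ∑ y₁ : Fin L → 𝒴, ∑ y₂ : Fin L → 𝒴,
        condPos PX W L s y₁ y₂ * ∏ i ∈ range s, g i (overlapPair L s y₁ y₂ i)
      = ∏ i ∈ range s, ∑ z : 𝒴 × 𝒴, jointYY PX W z.1 z.2 * g i z := by
  set h : ℕ → 𝒴 → 𝒴 → ℝ := fun i y y' => jointYY PX W y y' * g i (y, y')
  have hinner : ∀ y₁ : Fin L → 𝒴, ∑ y₂ : Fin L → 𝒴,
      condPos PX W L s y₁ y₂ * ∏ i ∈ range s, g i (overlapPair L s y₁ y₂ i)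
        = (∏ j ∈ range (L - s), margY PX W (idx y₁ j)) *
            ∏ i ∈ range s, ∑ y', h i (idx y₁ (L - s + i)) y' := fun y₁ => by
    have := sum_prod_idx_mul_prod_idx (Nat.add_sub_cancel' hs)
      (fun i y' => h i (idx y₁ (L - s + i)) y') (fun _ => margY PX W)
    simp only [sum_margY hPX hW, prod_const_one, mul_one] at this
    rw [← this, mul_sum]
    refine sum_congr rfl fun y₂ _ => ?_
    simp only [condPos_eq hPX hs, overlapPair, h, prod_mul_distrib]
    ring
  have := sum_prod_idx_mul_prod_idx (Nat.sub_add_cancel hs) (fun _ => margY PX W)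
    (fun i y => ∑ y', h i y y')
  simp only [sum_margY hPX hW, prod_const_one, one_mul] at this
  simp_rw [hinner, this, Fintype.sum_prod_type, h]

theorem sum_condPos_mul_comp_overlapPair (hPX : IsPmf PX) (hW : ∀ x, IsPmf (W x)) {L s : ℕ}
    (hs : s ≤ L) (F : (Fin s → 𝒴 × 𝒴) → ℝ) :
    ∑ y₁ : Fin L → 𝒴, ∑ y₂ : Fin L → 𝒴,
        condPos PX W L s y₁ y₂ * F (fun i => overlapPair L s y₁ y₂ i)
      = ∑ v : Fin s → 𝒴 × 𝒴, (∏ i, jointYY PX W (v i).1 (v i).2) * F v := by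
  classical
  -- `F` is a combination of point masses, and point masses factor over the coordinates.
  have hF : ∀ w, F w = ∑ v, F v * ∏ i ∈ range s, if idx w i = idx v i then 1 else 0 := by
    simp [prod_range_ite_idx_eq]
  have hpoint : ∀ v : Fin s → 𝒴 × 𝒴, ∑ y₁ : Fin L → 𝒴, ∑ y₂ : Fin L → 𝒴,
      condPos PX W L s y₁ y₂ * ∏ i ∈ range s,
        (if overlapPair L s y₁ y₂ i = idx v i then 1 else 0)
      = ∏ i, jointYY PX W (v i).1 (v i).2 := fun v => by
    rw [sum_condPos_mul_prod hPX hW hs fun i z => if z = idx v i then 1 else 0,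
      ← Fin.prod_univ_eq_prod_range]
    simp [idx_eq v (Fin.is_lt _)]
  have hpairs : ∀ (y₁ y₂ : Fin L → 𝒴) (v : Fin s → 𝒴 × 𝒴),
      (∏ i ∈ range s, if idx (fun i : Fin s => overlapPair L s y₁ y₂ i) i = idx v i then 1 else 0)
        = ∏ i ∈ range s, if overlapPair L s y₁ y₂ i = idx v i then (1 : ℝ) else 0 :=
    fun y₁ y₂ v => prod_congr rfl fun i hi => by rw [idx_eq _ (mem_range.1 hi)]
  calc ∑ y₁ : Fin L → 𝒴, ∑ y₂ : Fin L → 𝒴,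
        condPos PX W L s y₁ y₂ * F (fun i => overlapPair L s y₁ y₂ i)
      = ∑ v, F v * ∑ y₁ : Fin L → 𝒴, ∑ y₂ : Fin L → 𝒴, condPos PX W L s y₁ y₂ *
          ∏ i ∈ range s, if overlapPair L s y₁ y₂ i = idx v i then 1 else 0 := by
        simp_rw [mul_sum, sum_comm (γ := Fin s → 𝒴 × 𝒴)]
        refine sum_congr rfl fun y₁ _ => sum_congr rfl fun y₂ _ => ?_
        rw [hF, mul_sum]
        simp_rw [hpairs]
        exact sum_congr rfl fun v _ => by ring
    _ = ∑ v : Fin s → 𝒴 × 𝒴, (∏ i, jointYY PX W (v i).1 (v i).2) * F v := by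
        simp_rw [hpoint, mul_comm]

theorem condPos_nonneg (hPX : IsPmf PX) (hW : ∀ x, IsPmf (W x)) (L s : ℕ) (y₁ y₂ : Fin L → 𝒴) :
    0 ≤ condPos PX W L s y₁ y₂ :=
  sum_nonneg fun _ _ => mul_nonneg (prod_nonneg fun _ _ => hPX.1 _)
    (mul_nonneg (prod_nonneg fun _ _ => (hW _).1 _) (prod_nonneg fun _ _ => (hW _).1 _))

theorem condLik_zero_nonneg (hPX : IsPmf PX) (hW : ∀ x, IsPmf (W x)) (L : ℕ)
    (y₁ y₂ : Fin L → 𝒴) : 0 ≤ condLik PX W L 0 y₁ y₂ := by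
  rw [condLik_zero]
  exact mul_nonneg (prod_nonneg fun _ _ => margY_nonneg hPX hW _)
    (prod_nonneg fun _ _ => margY_nonneg hPX hW _)

theorem sum_condPos (hPX : IsPmf PX) (hW : ∀ x, IsPmf (W x)) {L s : ℕ} (hs : s ≤ L) :
    ∑ y₁ : Fin L → 𝒴, ∑ y₂ : Fin L → 𝒴, condPos PX W L s y₁ y₂ = 1 := by
  have h := sum_condPos_mul_comp_overlapPair hPX hW hs fun _ => 1
  simp only [mul_one] at h
  rw [h, ← Fintype.prod_sum fun (_ : Fin s) (z : 𝒴 × 𝒴) => jointYY PX W z.1 z.2,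
    sum_jointYY hPX hW, prod_const_one]

theorem log_lt_sum_log_lam (hPX : IsPmf PX) (hW : ∀ x, IsPmf (W x)) {L s : ℕ} (hs : s ≤ L)
    {c : ℝ} (hc : 0 < c) {y₁ y₂ : Fin L → 𝒴}
    (hlt : c * condLik PX W L 0 y₁ y₂ < condPos PX W L s y₁ y₂) :
    log c <
      ∑ i : Fin s, log (lam PX W (overlapPair L s y₁ y₂ i).1 (overlapPair L s y₁ y₂ i).2) := by
  rw [condPos_eq_condLik_zero_mul_prod_lam hPX hW hs] at hlt
  have hQ : 0 < condLik PX W L 0 y₁ y₂ :=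
    (condLik_zero_nonneg hPX hW L y₁ y₂).lt_of_ne fun h => by simp [← h] at hlt
  have hΛ := lt_of_mul_lt_mul_left (mul_comm c _ ▸ hlt) hQ.le
  rw [Fin.sum_univ_eq_sum_range (fun i => log (lam PX W (overlapPair L s y₁ y₂ i).1
    (overlapPair L s y₁ y₂ i).2)), ← log_prod (prod_ne_zero_iff.1 (hc.trans hΛ).ne')]
  exact log_lt_log hc hΛ

noncomputable def infoVar (PX : 𝒳 → ℝ) (W : 𝒳 → 𝒴 → ℝ) : ℝ :=
  ∑ z : 𝒴 × 𝒴, jointYY PX W z.1 z.2 * (log (lam PX W z.1 z.2) - mutInf PX W) ^ 2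

theorem infoVar_nonneg (hPX : IsPmf PX) (hW : ∀ x, IsPmf (W x)) : 0 ≤ infoVar PX W :=
  sum_nonneg fun _ _ => mul_nonneg (jointYY_nonneg hPX hW _ _) (sq_nonneg _)

theorem one_sub_le_sum_min_condPos (hPX : IsPmf PX) (hW : ∀ x, IsPmf (W x)) {L s : ℕ}
    (hs : s ≤ L) {c : ℝ} (hc : 0 < c) (hsc : s * mutInf PX W < log c) :
    1 - s * infoVar PX W / (log c - s * mutInf PX W) ^ 2
      ≤ ∑ y₁ : Fin L → 𝒴, ∑ y₂ : Fin L → 𝒴,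
          min (condPos PX W L s y₁ y₂) (c * condLik PX W L 0 y₁ y₂) := by
  classical
  set Z : 𝒴 × 𝒴 → ℝ := fun z => log (lam PX W z.1 z.2)
  set F : (Fin s → 𝒴 × 𝒴) → ℝ := fun v => if log c < ∑ i, Z (v i) then 1 else 0
  have hpoint : ∀ y₁ y₂ : Fin L → 𝒴,
      condPos PX W L s y₁ y₂ - condPos PX W L s y₁ y₂ * F (fun i => overlapPair L s y₁ y₂ i)
        ≤ min (condPos PX W L s y₁ y₂) (c * condLik PX W L 0 y₁ y₂) := fun y₁ y₂ => by
    by_cases hE : log c < ∑ i : Fin s, Z (overlapPair L s y₁ y₂ i)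
    · simpa [F, hE] using le_min (condPos_nonneg hPX hW L s y₁ y₂)
        (mul_nonneg hc.le (condLik_zero_nonneg hPX hW L y₁ y₂))
    · simpa [F, hE] using fun h => hE (log_lt_sum_log_lam hPX hW hs hc h)
  have htail : ∑ v : Fin s → 𝒴 × 𝒴, (∏ i, jointYY PX W (v i).1 (v i).2) * F v
      ≤ s * infoVar PX W / (log c - s * mutInf PX W) ^ 2 := by
    have h := sum_pi_filter_lt_prod_le (s := s) (fun z => jointYY_nonneg hPX hW z.1 z.2)
      (sum_jointYY hPX hW) Z (a := log c) (by rwa [← mutInf_eq_sum hPX hW])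
    rw [← mutInf_eq_sum hPX hW, sum_filter] at h
    simp only [F, mul_ite, mul_one, mul_zero]
    exact h
  calc 1 - s * infoVar PX W / (log c - s * mutInf PX W) ^ 2
      ≤ 1 - ∑ v : Fin s → 𝒴 × 𝒴, (∏ i, jointYY PX W (v i).1 (v i).2) * F v := by
        linarith
    _ = ∑ y₁ : Fin L → 𝒴, ∑ y₂ : Fin L → 𝒴, (condPos PX W L s y₁ y₂ -
          condPos PX W L s y₁ y₂ * F (fun i => overlapPair L s y₁ y₂ i)) := by
        simp only [sum_sub_distrib, sum_condPos hPX hW hs,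
          sum_condPos_mul_comp_overlapPair hPX hW hs]
    _ ≤ _ := sum_le_sum fun y₁ _ => sum_le_sum fun y₂ _ => hpoint y₁ y₂

end Reads

section BayesError

open Finset

theorem sum_erase_min_le_sum_ite_ne {ι : Type*} [DecidableEq ι] {S : Finset ι} {t₀ : ι}
    (ht₀ : t₀ ∈ S) {w : ι → ℝ} (hw₀ : 0 ≤ w t₀) (d : ι) :
    ∑ t ∈ S.erase t₀, min (w t) (w t₀) ≤ ∑ t ∈ S, if d ≠ t then w t else 0 := by
  have hpoint : ∀ t, min (w t) (w t₀)
      ≤ (if d ≠ t then w t else 0) + if d = t then w t₀ else 0 := fun t => by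
    by_cases h : d = t <;> simp [h]
  have hhit : (if d ∈ S.erase t₀ then w t₀ else 0) ≤ if d ≠ t₀ then w t₀ else 0 := by
    by_cases h : d = t₀ <;> simp [h]
    split_ifs <;> simp [hw₀]
  calc ∑ t ∈ S.erase t₀, min (w t) (w t₀)
      ≤ ∑ t ∈ S.erase t₀, ((if d ≠ t then w t else 0) + if d = t then w t₀ else 0) :=
        sum_le_sum fun t _ => hpoint t
    _ ≤ ∑ t ∈ S.erase t₀, (if d ≠ t then w t else 0) + if d ≠ t₀ then w t₀ else 0 := by
        rw [sum_add_distrib, sum_ite_eq]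
        exact add_le_add_right hhit _
    _ = ∑ t ∈ S, if d ≠ t then w t else 0 := by
        rw [add_comm, add_sum_erase S (fun t => if d ≠ t then w t else 0) ht₀]

variable {PX : 𝒳 → ℝ} {W : 𝒳 → 𝒴 → ℝ}

theorem priorT_nonneg {n L : ℕ} (hc : 0 ≤ (n : ℝ) - (2 * L - 1)) (t : ℤ) : 0 ≤ priorT n L t := by
  unfold priorT
  split_ifs
  exacts [div_nonneg hc n.cast_nonneg, inv_nonneg.2 n.cast_nonneg, le_rfl]

theorem priorT_of_mem {n L : ℕ} {t : ℤ} (ht : t ∈ (Icc (1 - (L : ℤ)) L).erase 0) :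
    priorT n L t = (n : ℝ)⁻¹ := by
  simp [priorT, ne_of_mem_erase ht, mem_of_mem_erase ht]

theorem condLik_nonneg (hPX : IsPmf PX) (hW : ∀ x, IsPmf (W x)) (L : ℕ) (t : ℤ)
    (y₁ y₂ : Fin L → 𝒴) : 0 ≤ condLik PX W L t y₁ y₂ := by
  unfold condLik
  split_ifs
  · exact condPos_nonneg hPX hW _ _ _ _
  · exact condPos_nonneg hPX hW _ _ _ _
  · exact condLik_zero (PX := PX) (W := W) L y₁ y₂ ▸ condLik_zero_nonneg hPX hW L y₁ y₂
  · exact le_rfl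

theorem sum_comp_condLik_eq (g : ℝ → ℝ → ℝ) {L : ℕ} {t : ℤ}
    (ht : t ∈ (Icc (1 - (L : ℤ)) L).erase 0) :
    ∑ y₁ : Fin L → 𝒴, ∑ y₂ : Fin L → 𝒴, g (condLik PX W L t y₁ y₂) (condLik PX W L 0 y₁ y₂)
      = ∑ y₁ : Fin L → 𝒴, ∑ y₂ : Fin L → 𝒴,
          g (condPos PX W L t.natAbs y₁ y₂) (condLik PX W L 0 y₁ y₂) := by
  obtain ⟨ht0, ht⟩ := mem_erase.1 ht
  rw [mem_Icc] at ht
  rcases ht0.lt_or_gt with hneg | hpos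
  · have hcond : ∀ y₁ y₂ : Fin L → 𝒴,
        condLik PX W L t y₁ y₂ = condPos PX W L t.natAbs y₂ y₁ := fun y₁ y₂ => by
      simp [condLik, show ¬(1 ≤ t) by omega, show 1 - (L : ℤ) ≤ t by omega,
        show t ≤ -1 by omega, show (-t).toNat = t.natAbs by omega]
    have hsymm : ∀ y₁ y₂ : Fin L → 𝒴, condLik PX W L 0 y₁ y₂ = condLik PX W L 0 y₂ y₁ :=
      fun y₁ y₂ => by rw [condLik_zero, condLik_zero, mul_comm]
    rw [sum_comm]
    exact sum_congr rfl fun y₂ _ => sum_congr rfl fun y₁ _ => by rw [hcond, hsymm]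
  · have hcond : ∀ y₁ y₂ : Fin L → 𝒴,
        condLik PX W L t y₁ y₂ = condPos PX W L t.natAbs y₁ y₂ := fun y₁ y₂ => by
      simp [condLik, show 1 ≤ t by omega, show t ≤ L by omega, show t.toNat = t.natAbs by omega]
    simp_rw [hcond]

theorem sum_condLik (hPX : IsPmf PX) (hW : ∀ x, IsPmf (W x)) {L : ℕ} {t : ℤ}
    (ht : t ∈ (Icc (1 - (L : ℤ)) L).erase 0) :
    ∑ y₁ : Fin L → 𝒴, ∑ y₂ : Fin L → 𝒴, condLik PX W L t y₁ y₂ = 1 := by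
  rw [sum_comp_condLik_eq (fun a _ => a) ht, sum_condPos hPX hW]
  have := mem_Icc.1 (mem_of_mem_erase ht)
  omega

theorem sum_min_le_errProbN (hPX : IsPmf PX) (hW : ∀ x, IsPmf (W x)) {n L : ℕ} (hL : 1 ≤ L)
    (hc : 0 ≤ (n : ℝ) - (2 * L - 1)) (That : (Fin L → 𝒴) → (Fin L → 𝒴) → ℤ) :
    ∑ t ∈ (Icc (1 - (L : ℤ)) L).erase 0, ∑ y₁ : Fin L → 𝒴, ∑ y₂ : Fin L → 𝒴,
        min (priorT n L t * condLik PX W L t y₁ y₂) (priorT n L 0 * condLik PX W L 0 y₁ y₂)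
      ≤ errProbN PX W n L That := by
  have hswap : ∀ f : ℤ → (Fin L → 𝒴) → (Fin L → 𝒴) → ℝ, ∀ T : Finset ℤ,
      ∑ t ∈ T, ∑ y₁, ∑ y₂, f t y₁ y₂ = ∑ y₁, ∑ y₂, ∑ t ∈ T, f t y₁ y₂ := fun f T => by
    rw [sum_comm]
    exact sum_congr rfl fun _ _ => sum_comm
  rw [errProbN, hswap, hswap]
  refine sum_le_sum fun y₁ _ => sum_le_sum fun y₂ _ => ?_
  exact sum_erase_min_le_sum_ite_ne (S := Icc (1 - (L : ℤ)) L) (mem_Icc.2 (by omega))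
    (mul_nonneg (priorT_nonneg hc 0) (condLik_nonneg hPX hW L 0 y₁ y₂)) _

theorem sum_min_priorT_mul_condLik_ge (hPX : IsPmf PX) (hW : ∀ x, IsPmf (W x)) {n L : ℕ}
    {t : ℤ} (ht : t ∈ (Icc (1 - (L : ℤ)) L).erase 0) (hc : 0 < (n : ℝ) - (2 * L - 1))
    (hsc : t.natAbs * mutInf PX W < log ((n : ℝ) - (2 * L - 1))) :
    (n : ℝ)⁻¹ * (1 - t.natAbs * infoVar PX W /
        (log ((n : ℝ) - (2 * L - 1)) - t.natAbs * mutInf PX W) ^ 2)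
      ≤ ∑ y₁ : Fin L → 𝒴, ∑ y₂ : Fin L → 𝒴,
          min (priorT n L t * condLik PX W L t y₁ y₂) (priorT n L 0 * condLik PX W L 0 y₁ y₂) := by
  have hinv : (0 : ℝ) ≤ (n : ℝ)⁻¹ := inv_nonneg.2 n.cast_nonneg
  have hprior₀ : priorT n L 0 = (n : ℝ)⁻¹ * ((n : ℝ) - (2 * L - 1)) := by
    simp [priorT, div_eq_inv_mul]
  simp_rw [priorT_of_mem ht, hprior₀, mul_assoc, ← mul_min_of_nonneg _ _ hinv]
  rw [sum_comp_condLik_eq (fun a b => (n : ℝ)⁻¹ * min a (((n : ℝ) - (2 * L - 1)) * b)) ht]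
  simp_rw [← mul_sum]
  have := mem_Icc.1 (mem_of_mem_erase ht)
  exact mul_le_mul_of_nonneg_left
    (one_sub_le_sum_min_condPos hPX hW (by omega) hc hsc) hinv

theorem errProbN_ge (hPX : IsPmf PX) (hW : ∀ x, IsPmf (W x)) {n L D : ℕ} (hDL : D < L)
    (hc : 0 < (n : ℝ) - (2 * L - 1)) (hI : 0 ≤ mutInf PX W)
    (hDI : D * mutInf PX W < log ((n : ℝ) - (2 * L - 1)))
    (That : (Fin L → 𝒴) → (Fin L → 𝒴) → ℤ) :
    2 * D / n * (1 - D * infoVar PX W / (log ((n : ℝ) - (2 * L - 1)) - D * mutInf PX W) ^ 2)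
      ≤ errProbN PX W n L That := by
  set a := log ((n : ℝ) - (2 * L - 1))
  set G : ℤ → ℝ := fun t => ∑ y₁ : Fin L → 𝒴, ∑ y₂ : Fin L → 𝒴,
    min (priorT n L t * condLik PX W L t y₁ y₂) (priorT n L 0 * condLik PX W L 0 y₁ y₂)
  have hG : ∀ t ∈ (Icc (-(D : ℤ)) D).erase 0,
      (n : ℝ)⁻¹ * (1 - D * infoVar PX W / (a - D * mutInf PX W) ^ 2) ≤ G t := fun t ht => by
    have htD := mem_Icc.1 (mem_of_mem_erase ht)
    have hsD : (t.natAbs : ℝ) ≤ D := by exact_mod_cast (show t.natAbs ≤ D by omega)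
    have hsI : t.natAbs * mutInf PX W ≤ D * mutInf PX W := mul_le_mul_of_nonneg_right hsD hI
    refine le_trans (mul_le_mul_of_nonneg_left (sub_le_sub_left ?_ 1) (inv_nonneg.2 n.cast_nonneg))
      (sum_min_priorT_mul_condLik_ge hPX hW ?_ hc (hsI.trans_lt hDI))
    · exact div_le_div₀ (mul_nonneg (by positivity) (infoVar_nonneg hPX hW))
        (mul_le_mul_of_nonneg_right hsD (infoVar_nonneg hPX hW)) (by nlinarith)
        (pow_le_pow_left₀ (by linarith) (by linarith) 2)
    · exact mem_erase.2 ⟨ne_of_mem_erase ht, mem_Icc.2 (by omega)⟩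
  have hcard : #((Icc (-(D : ℤ)) D).erase 0) = 2 * D := by
    rw [card_erase_of_mem (mem_Icc.2 (by omega)), Int.card_Icc]
    omega
  have hsub : (Icc (-(D : ℤ)) D).erase 0 ⊆ (Icc (1 - (L : ℤ)) L).erase 0 := fun t ht => by
    have := mem_Icc.1 (mem_of_mem_erase ht)
    exact mem_erase.2 ⟨ne_of_mem_erase ht, mem_Icc.2 (by omega)⟩
  have hG₀ : ∀ t, 0 ≤ G t := fun t => sum_nonneg fun y₁ _ => sum_nonneg fun y₂ _ =>
    le_min (mul_nonneg (priorT_nonneg hc.le t) (condLik_nonneg hPX hW L t y₁ y₂))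
      (mul_nonneg (priorT_nonneg hc.le 0) (condLik_nonneg hPX hW L 0 y₁ y₂))
  calc 2 * D / n * (1 - D * infoVar PX W / (a - D * mutInf PX W) ^ 2)
      = #((Icc (-(D : ℤ)) D).erase 0) •
          ((n : ℝ)⁻¹ * (1 - D * infoVar PX W / (a - D * mutInf PX W) ^ 2)) := by
        rw [hcard, nsmul_eq_mul]
        push_cast
        ring
    _ ≤ ∑ t ∈ (Icc (-(D : ℤ)) D).erase 0, G t := card_nsmul_le_sum _ _ _ hG
    _ ≤ ∑ t ∈ (Icc (1 - (L : ℤ)) L).erase 0, G t :=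
        sum_le_sum_of_subset_of_nonneg hsub fun t _ _ => hG₀ t
    _ ≤ errProbN PX W n L That := sum_min_le_errProbN hPX hW (by omega) hc.le That

theorem errProbN_nonneg (hPX : IsPmf PX) (hW : ∀ x, IsPmf (W x)) {n L : ℕ}
    (hc : 0 ≤ (n : ℝ) - (2 * L - 1)) (That : (Fin L → 𝒴) → (Fin L → 𝒴) → ℤ) :
    0 ≤ errProbN PX W n L That :=
  sum_nonneg fun t _ => sum_nonneg fun y₁ _ => sum_nonneg fun y₂ _ => by
    split_ifs
    exacts [mul_nonneg (priorT_nonneg hc t) (condLik_nonneg hPX hW L t y₁ y₂), le_rfl]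

theorem errProbN_zero (hPX : IsPmf PX) (hW : ∀ x, IsPmf (W x)) {n L : ℕ} (hL : 1 ≤ L) :
    errProbN PX W n L (fun _ _ => 0) = (2 * L - 1) / n := by
  have h₀ : (0 : ℤ) ∈ Icc (1 - (L : ℤ)) L := mem_Icc.2 (by omega)
  have hterm : ∀ t ∈ (Icc (1 - (L : ℤ)) L).erase 0, ∑ y₁ : Fin L → 𝒴, ∑ y₂ : Fin L → 𝒴,
      (if (0 : ℤ) ≠ t then priorT n L t * condLik PX W L t y₁ y₂ else 0) = (n : ℝ)⁻¹ :=
    fun t ht => by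
      simp_rw [if_pos (ne_of_mem_erase ht).symm, ← mul_sum, sum_condLik hPX hW ht,
        priorT_of_mem ht, mul_one]
  have hcard : #((Icc (1 - (L : ℤ)) L).erase 0) = 2 * L - 1 := by
    rw [card_erase_of_mem h₀, Int.card_Icc]
    omega
  rw [errProbN, ← add_sum_erase _ _ h₀, sum_congr rfl hterm]
  simp [hcard, Nat.cast_sub (show 1 ≤ 2 * L by omega), div_eq_mul_inv]

theorem le_PstarN (hPX : IsPmf PX) (hW : ∀ x, IsPmf (W x)) {β : ℝ} {n D : ℕ} (hDL : D < ell β n)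
    (hc : 0 < (n : ℝ) - (2 * ell β n - 1)) (hI : 0 ≤ mutInf PX W)
    (hDI : D * mutInf PX W < log ((n : ℝ) - (2 * ell β n - 1))) :
    2 * D / n * (1 - D * infoVar PX W / (log ((n : ℝ) - (2 * ell β n - 1)) - D * mutInf PX W) ^ 2)
      ≤ PstarN PX W β n :=
  le_csInf ⟨_, fun _ _ => 0, fun _ _ => show (0 : ℤ) ∈ _ from mem_Icc.2 (by omega), rfl⟩
    fun _ ⟨That, _, he⟩ => he ▸ errProbN_ge hPX hW hDL hc hI hDI That

theorem PstarN_le (hPX : IsPmf PX) (hW : ∀ x, IsPmf (W x)) {β : ℝ} {n : ℕ} (hL : 1 ≤ ell β n)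
    (hc : 0 ≤ (n : ℝ) - (2 * ell β n - 1)) :
    PstarN PX W β n ≤ (2 * ell β n - 1) / n :=
  errProbN_zero (PX := PX) (W := W) hPX hW (n := n) hL ▸
    csInf_le ⟨0, fun _ ⟨That, _, he⟩ => he ▸ errProbN_nonneg hPX hW hc That⟩
      ⟨fun _ _ => 0, fun _ _ => show (0 : ℤ) ∈ _ from mem_Icc.2 (by omega), rfl⟩

end BayesError

section Asymptotics

open Topology

variable {PX : 𝒳 → ℝ} {W : 𝒳 → 𝒴 → ℝ}

theorem tendsto_log_natCast_atTop : Tendsto (fun n : ℕ => log n) atTop atTop :=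
  tendsto_log_atTop.comp tendsto_natCast_atTop_atTop

theorem tendsto_ell_div_log {β : ℝ} (hβ : 0 ≤ β) :
    Tendsto (fun n => (ell β n : ℝ) / log n) atTop (𝓝 β) :=
  (tendsto_nat_ceil_mul_div_atTop hβ).comp tendsto_log_natCast_atTop

theorem tendsto_sub_div_natCast {β : ℝ} (hβ : 0 ≤ β) :
    Tendsto (fun n : ℕ => ((n : ℝ) - (2 * ell β n - 1)) / n) atTop (𝓝 1) := by
  have hlog : Tendsto (fun n : ℕ => log n / n) atTop (𝓝 0) :=
    isLittleO_log_id_atTop.tendsto_div_nhds_zero.comp tendsto_natCast_atTop_atTop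
  have hinv : Tendsto (fun n : ℕ => (n : ℝ)⁻¹) atTop (𝓝 0) :=
    tendsto_inv_atTop_zero.comp tendsto_natCast_atTop_atTop
  have h := (tendsto_const_nhds (x := (1 : ℝ))).sub
    ((((tendsto_ell_div_log hβ).mul hlog).const_mul 2).sub hinv)
  rw [mul_zero, mul_zero, sub_zero, sub_zero] at h
  refine h.congr' ?_
  filter_upwards [eventually_gt_atTop 1] with n hn
  have hn : (1 : ℝ) < n := by exact_mod_cast hn
  have hlogn : log n ≠ 0 := (log_pos hn).ne'
  field_simp

theorem tendsto_log_sub_div_log {β : ℝ} (hβ : 0 ≤ β) :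
    Tendsto (fun n : ℕ => log ((n : ℝ) - (2 * ell β n - 1)) / log n) atTop (𝓝 1) := by
  have h := tendsto_sub_div_natCast hβ
  have hlog := ((h.log one_ne_zero).div_atTop tendsto_log_natCast_atTop).add_const 1
  rw [zero_add] at hlog
  refine hlog.congr' ?_
  filter_upwards [eventually_gt_atTop 1, h.eventually (lt_mem_nhds one_pos)] with n hn hpos
  have hn : (1 : ℝ) < n := by exact_mod_cast hn
  have hn₀ : (0 : ℝ) < n := zero_lt_one.trans hn
  rw [log_div ((div_pos_iff_of_pos_right hn₀).1 hpos).ne' hn₀.ne',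
    sub_div, div_self (log_pos hn).ne']
  ring

theorem eventually_sub_pos {β : ℝ} (hβ : 0 ≤ β) :
    ∀ᶠ n : ℕ in atTop, 0 < (n : ℝ) - (2 * ell β n - 1) := by
  filter_upwards [eventually_gt_atTop 0,
    (tendsto_sub_div_natCast hβ).eventually (lt_mem_nhds one_pos)] with n hn hpos
  exact (div_pos_iff_of_pos_right (by exact_mod_cast hn)).1 hpos

-- Without an upper bound, `liminf` in `ℝ` would be a junk value.
theorem isBoundedUnder_le_mul_PstarN (hPX : IsPmf PX) (hW : ∀ x, IsPmf (W x)) {β : ℝ}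
    (hβ : 0 < β) :
    IsBoundedUnder (· ≤ ·) atTop fun n : ℕ => (n / log n) * PstarN PX W β n := by
  have h := ((tendsto_ell_div_log hβ.le).const_mul 2).sub
    (tendsto_inv_atTop_zero.comp tendsto_log_natCast_atTop)
  refine h.isBoundedUnder_le.mono_le ?_
  filter_upwards [eventually_gt_atTop 1, eventually_sub_pos hβ.le] with n hn hc
  have hn : (1 : ℝ) < n := by exact_mod_cast hn
  have hlog := log_pos hn
  have hL : 1 ≤ ell β n := Nat.one_le_ceil_iff.2 (by positivity)
  calc (n / log n) * PstarN PX W β n ≤ (n / log n) * ((2 * ell β n - 1) / n) :=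
        mul_le_mul_of_nonneg_left (PstarN_le hPX hW hL hc.le) (by positivity)
    _ = 2 * (ell β n / log n) - (log n)⁻¹ := by
        field_simp

theorem two_mul_div_log_mul_le_mul_PstarN (hPX : IsPmf PX) (hW : ∀ x, IsPmf (W x))
    (hI : 0 ≤ mutInf PX W) {β : ℝ} {n D : ℕ} (hn : 1 < n) (hDL : D < ell β n)
    (hc : 0 < (n : ℝ) - (2 * ell β n - 1))
    (hDI : D * mutInf PX W < log ((n : ℝ) - (2 * ell β n - 1))) :
    2 * (D / log n) *
        (1 - D * infoVar PX W / (log ((n : ℝ) - (2 * ell β n - 1)) - D * mutInf PX W) ^ 2)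
      ≤ (n / log n) * PstarN PX W β n := by
  have hlog := log_pos (show (1 : ℝ) < n by exact_mod_cast hn)
  calc 2 * (D / log n) *
        (1 - D * infoVar PX W / (log ((n : ℝ) - (2 * ell β n - 1)) - D * mutInf PX W) ^ 2)
      = (n / log n) * (2 * D / n *
        (1 - D * infoVar PX W / (log ((n : ℝ) - (2 * ell β n - 1)) - D * mutInf PX W) ^ 2)) := by
        field_simp
    _ ≤ (n / log n) * PstarN PX W β n :=
        mul_le_mul_of_nonneg_left (le_PstarN hPX hW hDL hc hI hDI) (by positivity)

theorem two_mul_le_liminf_mul_PstarN (hPX : IsPmf PX) (hW : ∀ x, IsPmf (W x))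
    (hI : 0 ≤ mutInf PX W) {β δ : ℝ} (hδ : 0 ≤ δ) (hδβ : δ < β) (hδI : δ * mutInf PX W < 1) :
    2 * δ ≤ liminf (fun n : ℕ => (n / log n) * PstarN PX W β n) atTop := by
  set I := mutInf PX W
  set V := infoVar PX W
  -- Overlaps `|t| ≤ D n` are too short to be told apart from `T = 0`.
  set D : ℕ → ℕ := fun n => ⌊δ * log n⌋₊
  set r : ℕ → ℝ := fun n => D n / log n
  set ρ : ℕ → ℝ := fun n => log ((n : ℝ) - (2 * ell β n - 1)) / log n
  have hr : Tendsto r atTop (𝓝 δ) :=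
    (tendsto_nat_floor_mul_div_atTop hδ).comp tendsto_log_natCast_atTop
  have hρ : Tendsto ρ atTop (𝓝 1) := tendsto_log_sub_div_log (hδ.trans hδβ.le)
  have hb : Tendsto (fun n => r n * V / (ρ n - r n * I) ^ 2 / log n) atTop (𝓝 0) :=
    ((hr.mul_const V).div ((hρ.sub (hr.mul_const I)).pow 2)
      (pow_ne_zero 2 (sub_pos.2 hδI).ne')).div_atTop tendsto_log_natCast_atTop
  have hg : Tendsto (fun n => 2 * r n * (1 - r n * V / (ρ n - r n * I) ^ 2 / log n)) atTop
      (𝓝 (2 * δ)) := by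
    simpa using (hr.const_mul 2).mul ((tendsto_const_nhds (x := (1 : ℝ))).sub hb)
  have hev : ∀ᶠ n : ℕ in atTop, 2 * r n * (1 - r n * V / (ρ n - r n * I) ^ 2 / log n)
      ≤ (n / log n) * PstarN PX W β n := by
    filter_upwards [eventually_gt_atTop 1, eventually_sub_pos (hδ.trans hδβ.le),
      (hr.mul_const I).eventually_lt hρ (by simpa using hδI)] with n hn hc hrρ
    have hlog := log_pos (show (1 : ℝ) < n by exact_mod_cast hn)
    have hDlog : (D n : ℝ) ≤ δ * log n := Nat.floor_le (by positivity)
    have hDL : D n < ell β n := by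
      exact_mod_cast hDlog.trans_lt ((mul_lt_mul_of_pos_right hδβ hlog).trans_le (Nat.le_ceil _))
    have hDI : D n * I < log ((n : ℝ) - (2 * ell β n - 1)) := by
      simpa [r, ρ, div_mul_eq_mul_div, div_lt_div_iff_of_pos_right hlog] using hrρ
    have hb : r n * V / (ρ n - r n * I) ^ 2 / log n
        = D n * V / (log ((n : ℝ) - (2 * ell β n - 1)) - D n * I) ^ 2 := by
      have : log ((n : ℝ) - (2 * ell β n - 1)) - D n * I ≠ 0 := (sub_pos.2 hDI).ne'
      simp only [r, ρ]
      field_simp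
    rw [hb]
    exact two_mul_div_log_mul_le_mul_PstarN hPX hW hI hn hDL hc hDI
  calc 2 * δ = liminf (fun n => 2 * r n * (1 - r n * V / (ρ n - r n * I) ^ 2 / log n)) atTop :=
        hg.liminf_eq.symm
    _ ≤ _ := liminf_le_liminf hev hg.isBoundedUnder_ge
        (isBoundedUnder_le_mul_PstarN hPX hW (hδ.trans_lt hδβ)).isCoboundedUnder_ge

end Asymptotics

/-- Matching lower bound on the asymptotic Bayesian error probability of
overlap detection in the noisy setting. -/
theorem noisy_lower_bound
    (PX : 𝒳 → ℝ) (W : 𝒳 → 𝒴 → ℝ)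
    (hPX : IsPmf PX) (hW : ∀ x, IsPmf (W x))
    (β : ℝ) (hβ : 0 < β)
    (hI : 0 < mutInf PX W) :
    2 * min β (1 / mutInf PX W) ≤
      liminf (fun n : ℕ => ((n : ℝ) / Real.log n) * PstarN PX W β n) atTop := by
  refine le_of_forall_lt_imp_le_of_dense fun a ha => ?_
  set δ := max (a / 2) 0
  have hδ : δ < min β (1 / mutInf PX W) := max_lt (by linarith) (lt_min hβ (by positivity))
  have hδI : δ * mutInf PX W < 1 := (lt_div_iff₀ hI).1 (hδ.trans_le (min_le_right _ _))
  calc a ≤ 2 * δ := by linarith [le_max_left (a / 2) 0]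
    _ ≤ _ := two_mul_le_liminf_mul_PstarN hPX hW hI.le (le_max_right _ _)
        (hδ.trans_le (min_le_left _ _)) hδI

end
end

section
/- Let μ be a stationary ergodic measure on 𝒳^ℤ whose entropy rate satisfies 0 < ℋ₁ < ∞ and such that for every α ∈ (1,2] the order-α Rényi entropy rate ℋ_α exists and ℋ_α → ℋ₁ as α ↓ 1. Fix β > 0, let ρ ∈ (0,1), and let τ : ℕ → ℕ satisfy τ(n) → ∞ and τ(n)/log n → 0. Then for every η > 0: lim_{n→∞} n · sup{ ∑_{x∈𝒳^t} P_{X₁^t}(x)² · 1[ P_{X₁^t}(x) ≤ (ρ^{τ(n)−1}·n_ℓ)^{−1} ] : t ∈ ℕ, t > (1+η)(log n)/ℋ₁ } = 0. -/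
open MeasureTheory Filter Real

section

variable {𝒳 : Type*} [Fintype 𝒳] [MeasurableSpace 𝒳] [MeasurableSingletonClass 𝒳]

/-- The left shift on two-sided sequences. -/
def shift {𝒳 : Type*} : (ℤ → 𝒳) → (ℤ → 𝒳) := fun ω i => ω (i + 1)

/-- The pmf of the block `(X_a, …, X_{a+t-1})` under `μ`. -/
noncomputable def blockPmf (μ : Measure (ℤ → 𝒳)) (a : ℤ) (t : ℕ) (x : Fin t → 𝒳) : ℝ :=
  (μ {ω | ∀ i : Fin t, ω (a + ((i : ℕ) : ℤ)) = x i}).toReal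

/-- Shannon entropy of the block `(X_1, …, X_t)`. -/
noncomputable def shannonH (μ : Measure (ℤ → 𝒳)) (t : ℕ) : ℝ :=
  ∑ x : Fin t → 𝒳, Real.negMulLog (blockPmf μ 1 t x)

/-- Order-`α` Rényi entropy of the block `(X_1, …, X_t)`. -/
noncomputable def renyiH (μ : Measure (ℤ → 𝒳)) (α : ℝ) (t : ℕ) : ℝ :=
  (1 - α)⁻¹ * Real.log (∑ x : Fin t → 𝒳, blockPmf μ 1 t x ^ α)

/-- `max_{x : P(x) > 0} log (1 / P_{X_1^t}(x))`. -/
noncomputable def maxInfo (μ : Measure (ℤ → 𝒳)) (t : ℕ) : ℝ :=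
  sSup {r : ℝ | ∃ x : Fin t → 𝒳, 0 < blockPmf μ 1 t x ∧ r = Real.log (1 / blockPmf μ 1 t x)}

/-- The σ-algebra generated by the coordinates with index `≤ i`. -/
def pastSigma (𝒳 : Type*) [MeasurableSpace 𝒳] (i : ℤ) : MeasurableSpace (ℤ → 𝒳) :=
  MeasurableSpace.comap (fun ω (j : {j : ℤ // j ≤ i}) => ω (j : ℤ)) inferInstance

/-- The σ-algebra generated by the coordinates with index `≥ i`. -/
def futureSigma (𝒳 : Type*) [MeasurableSpace 𝒳] (i : ℤ) : MeasurableSpace (ℤ → 𝒳) :=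
  MeasurableSpace.comap (fun ω (j : {j : ℤ // i ≤ j}) => ω (j : ℤ)) inferInstance

/-- Strong mixing coefficient `d(s)`. -/
noncomputable def mixCoef (μ : Measure (ℤ → 𝒳)) (s : ℕ) : ℝ :=
  sSup {r : ℝ | ∃ (i : ℤ) (E F : Set (ℤ → 𝒳)),
    MeasurableSet[pastSigma 𝒳 i] E ∧ MeasurableSet[futureSigma 𝒳 (i + (s : ℤ))] F ∧
    μ E ≠ 0 ∧ r = |(μ (F ∩ E)).toReal / (μ E).toReal - (μ F).toReal|}

/-- The window from which `I(2)` is drawn uniformly, given `I(1) = i₁`. -/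
noncomputable def window (n L : ℕ) (i₁ : ℤ) : Finset ℤ :=
  if i₁ ≤ (L : ℤ) - 1 then Finset.Icc (i₁ - (L : ℤ) + 1) (i₁ + (n : ℤ) - (L : ℤ))
  else if i₁ ≤ (n : ℤ) - (L : ℤ) + 1 then Finset.Icc 1 (n : ℤ)
  else Finset.Icc (i₁ + (L : ℤ) - (n : ℤ)) (i₁ + (L : ℤ) - 1)

/-- Joint pmf of the pair of starting indices `(I(1), I(2))`. -/
noncomputable def idxWeight (n L : ℕ) (i₁ i₂ : ℤ) : ℝ :=
  if i₁ ∈ Finset.Icc 1 (n : ℤ) ∧ i₂ ∈ window n L i₁ then (((n : ℝ)) ^ 2)⁻¹ else 0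

/-- The (signed) overlap between the two reads. -/
def overlap (L : ℕ) (i₁ i₂ : ℤ) : ℤ :=
  if i₁ ≤ i₂ then max 0 ((L : ℤ) - (i₂ - i₁)) else -(max 0 ((L : ℤ) - (i₁ - i₂)))

/-- Bayesian error probability of the detector `That` in the noiseless setting. -/
noncomputable def errProb (μ : Measure (ℤ → 𝒳)) (n L : ℕ)
    (That : (Fin L → 𝒳) → (Fin L → 𝒳) → ℤ) : ℝ :=
  ∑' p : ℤ × ℤ, idxWeight n L p.1 p.2 *
    (μ {ω | That (fun k => ω (p.1 + ((k : ℕ) : ℤ))) (fun k => ω (p.2 + ((k : ℕ) : ℤ))) ≠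
        overlap L p.1 p.2}).toReal

/-- Minimal Bayesian error probability over all detectors with values in `𝒯`. -/
noncomputable def Pstar (μ : Measure (ℤ → 𝒳)) (β : ℝ) (n : ℕ) : ℝ :=
  sInf {e : ℝ | ∃ That : (Fin (ell β n) → 𝒳) → (Fin (ell β n) → 𝒳) → ℤ,
    (∀ y₁ y₂, That y₁ y₂ ∈ Set.Icc (1 - (ell β n : ℤ)) ((ell β n : ℤ))) ∧
    e = errProb μ n (ell β n) That}

/-!
Choose `α ∈ (1, 2]` and `G` with `ℋ₁ / (1 + η) < G < ℋ_α`. Below the threshold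
`c = ρ^(τ(n)-1) n_ℓ` one has `p² ≤ c^(α-2) p^α`, so each truncated sum is at most
`c^(α-2) ∑ p^α = c^(α-2) exp(-(α-1) H_α(P_t)) ≤ c^(α-2) exp(-(α-1) G t)` once `t` is large.
Since `log c ~ log n` and `t > (1 + η) log n / ℋ₁`, `n` times this bound is
`n^((α-1)(1 - G(1+η)/ℋ₁) + o(1)) → 0`.
-/

theorem sq_le_rpow_mul_rpow_of_le_inv {p c α : ℝ} (hp : 0 ≤ p) (hc : 0 < c) (hpc : p ≤ c⁻¹)
    (hα : α ≤ 2) : p ^ 2 ≤ c ^ (α - 2) * p ^ α := by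
  rcases hp.eq_or_lt with rfl | hp
  · rw [zero_pow two_ne_zero]
    exact mul_nonneg (rpow_nonneg hc.le _) (rpow_nonneg le_rfl _)
  have hsplit : p ^ 2 = p ^ (2 - α) * p ^ α := by
    rw [← rpow_add hp, sub_add_cancel, rpow_two]
  have hpow : p ^ (2 - α) ≤ c ^ (α - 2) := by
    calc p ^ (2 - α) ≤ c⁻¹ ^ (2 - α) := rpow_le_rpow hp.le hpc (by linarith)
      _ = c ^ (α - 2) := by rw [inv_rpow hc.le, ← rpow_neg hc.le, neg_sub]
  rw [hsplit]
  exact mul_le_mul_of_nonneg_right hpow (rpow_nonneg hp.le _)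

theorem sum_sq_mul_ite_le_rpow_mul_sum_rpow {ι : Type*} [Fintype ι] {P : ι → ℝ}
    (hP : ∀ i, 0 ≤ P i) {c α : ℝ} (hc : 0 < c) (hα : α ≤ 2) :
    ∑ i, P i ^ 2 * (if P i ≤ c⁻¹ then 1 else 0) ≤ c ^ (α - 2) * ∑ i, P i ^ α := by
  rw [Finset.mul_sum]
  refine Finset.sum_le_sum fun i _ => ?_
  split_ifs with hPc
  · rw [mul_one]
    exact sq_le_rpow_mul_rpow_of_le_inv (hP i) hc hPc hα
  · rw [mul_zero]
    exact mul_nonneg (rpow_nonneg hc.le _) (rpow_nonneg (hP i) _)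

theorem blockPmf_nonneg {A : Type*} [MeasurableSpace A] (μ : Measure (ℤ → A)) (a : ℤ) (t : ℕ)
    (x : Fin t → A) : 0 ≤ blockPmf μ a t x :=
  ENNReal.toReal_nonneg

theorem sum_blockPmf_rpow_le_exp_renyiH {A : Type*} [Fintype A] [MeasurableSpace A]
    (μ : Measure (ℤ → A)) {α : ℝ} (hα : α ≠ 1) (t : ℕ) :
    ∑ x : Fin t → A, blockPmf μ 1 t x ^ α ≤ exp ((1 - α) * renyiH μ α t) := by
  rw [renyiH, ← mul_assoc, mul_inv_cancel₀ (sub_ne_zero.mpr hα.symm), one_mul]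
  exact le_exp_log _

theorem sum_sq_blockPmf_mul_ite_le {A : Type*} [Fintype A] [MeasurableSpace A]
    (μ : Measure (ℤ → A)) {α c G : ℝ} (hα : α ∈ Set.Ioc (1 : ℝ) 2) (hc : 0 < c) {t : ℕ}
    (hG : G * t < renyiH μ α t) :
    ∑ x : Fin t → A, blockPmf μ 1 t x ^ 2 * (if blockPmf μ 1 t x ≤ c⁻¹ then 1 else 0)
      ≤ c ^ (α - 2) * exp (-((α - 1) * G * t)) := by
  obtain ⟨hα₁, hα₂⟩ := hα
  calc _ ≤ c ^ (α - 2) * ∑ x : Fin t → A, blockPmf μ 1 t x ^ α :=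
        sum_sq_mul_ite_le_rpow_mul_sum_rpow (blockPmf_nonneg μ 1 t) hc hα₂
    _ ≤ c ^ (α - 2) * exp ((1 - α) * renyiH μ α t) := by
        gcongr
        exact sum_blockPmf_rpow_le_exp_renyiH μ hα₁.ne' t
    _ ≤ c ^ (α - 2) * exp (-((α - 1) * G * t)) := by
        gcongr
        nlinarith

theorem tendsto_natCast_mul_rpow_mul_exp_neg {c : ℕ → ℝ} (hc : ∀ᶠ n in atTop, 0 < c n)
    (hlog : Tendsto (fun n : ℕ => log (c n) / log n) atTop (nhds 1)) {γ κ : ℝ}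
    (hγκ : 1 + γ < κ) :
    Tendsto (fun n : ℕ => (n : ℝ) * (c n ^ γ * exp (-(κ * log n)))) atTop (nhds 0) := by
  have hlogn : Tendsto (fun n : ℕ => log n) atTop atTop :=
    tendsto_log_atTop.comp tendsto_natCast_atTop_atTop
  have hrate : Tendsto (fun n : ℕ => 1 + γ * (log (c n) / log n) - κ) atTop
      (nhds (1 + γ - κ)) := by
    simpa using ((hlog.const_mul γ).const_add 1).sub_const κ
  have hexponent := hlogn.atTop_mul_neg (by linarith) hrate
  refine (tendsto_exp_atBot.comp hexponent).congr' ?_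
  filter_upwards [hc, hlogn.eventually_gt_atTop 0] with n hcn hlogpos
  have hn : (0 : ℝ) < n := by
    by_contra! hn
    simp [le_antisymm hn n.cast_nonneg] at hlogpos
  rw [Function.comp_apply, rpow_def_of_pos hcn, ← exp_add, ← exp_log hn, ← exp_add, log_exp]
  congr 1
  field_simp
  ring

noncomputable def nEll (β : ℝ) (n : ℕ) : ℝ := (n : ℝ) - (2 * (ell β n : ℝ) - 1)

theorem tendsto_ell_div_natCast (β : ℝ) :
    Tendsto (fun n : ℕ => (ell β n : ℝ) / n) atTop (nhds 0) := by
  have hlog : Tendsto (fun n : ℕ => log n / n) atTop (nhds 0) :=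
    (isLittleO_log_id_atTop.comp_tendsto tendsto_natCast_atTop_atTop).tendsto_div_nhds_zero
  have hupper : Tendsto (fun n : ℕ => (|β| * log n + 1) / n) atTop (nhds 0) := by
    simpa [add_div, mul_div_assoc] using
      (hlog.const_mul |β|).add tendsto_one_div_atTop_nhds_zero_nat
  refine squeeze_zero (fun n => by positivity) (fun n => ?_) hupper
  have hell : (ell β n : ℝ) ≤ |β| * log n + 1 :=
    calc (ell β n : ℝ) ≤ ⌈|β| * log n⌉₊ :=
          Nat.cast_le.mpr (Nat.ceil_mono
            (mul_le_mul_of_nonneg_right (le_abs_self β) (log_natCast_nonneg n)))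
      _ ≤ |β| * log n + 1 := (Nat.ceil_lt_add_one (by positivity)).le
  gcongr

theorem tendsto_nEll_div_natCast (β : ℝ) :
    Tendsto (fun n : ℕ => nEll β n / n) atTop (nhds 1) := by
  have hlim : Tendsto (fun n : ℕ => 1 - 2 * ((ell β n : ℝ) / n) + 1 / n) atTop (nhds 1) := by
    simpa using ((tendsto_ell_div_natCast β).const_mul 2).const_sub 1 |>.add
      tendsto_one_div_atTop_nhds_zero_nat
  refine hlim.congr' ?_
  filter_upwards [eventually_gt_atTop 0] with n hn
  have hn' : (n : ℝ) ≠ 0 := by positivity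
  rw [nEll]
  field_simp
  ring

theorem tendsto_log_div_log_of_div_natCast_tendsto_one {u : ℕ → ℝ}
    (hu : Tendsto (fun n : ℕ => u n / n) atTop (nhds 1)) :
    Tendsto (fun n : ℕ => log (u n) / log n) atTop (nhds 1) := by
  have hlogn : Tendsto (fun n : ℕ => log n) atTop atTop :=
    tendsto_log_atTop.comp tendsto_natCast_atTop_atTop
  have hlogu : Tendsto (fun n : ℕ => log (u n / n)) atTop (nhds 0) := by
    simpa [Function.comp_def] using (continuousAt_log one_ne_zero).tendsto.comp hu
  have hlim : Tendsto (fun n : ℕ => log (u n / n) * (log n)⁻¹ + 1) atTop (nhds 1) := by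
    simpa using (hlogu.mul (tendsto_inv_atTop_zero.comp hlogn)).add_const 1
  refine hlim.congr' ?_
  filter_upwards [hu.eventually (eventually_gt_nhds one_pos), hlogn.eventually_gt_atTop 0,
    eventually_gt_atTop 0] with n hun hlogpos hn
  have hn' : (0 : ℝ) < n := by exact_mod_cast hn
  rw [log_div (div_pos_iff_of_pos_right hn' |>.mp (by linarith)).ne' hn'.ne']
  field_simp
  ring

theorem eventually_nEll_pos (β : ℝ) : ∀ᶠ n : ℕ in atTop, 0 < nEll β n := by
  filter_upwards [(tendsto_nEll_div_natCast β).eventually (eventually_gt_nhds one_pos),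
    eventually_gt_atTop 0] with n hratio hn
  exact (div_pos_iff_of_pos_right (show (0 : ℝ) < n by exact_mod_cast hn)).mp (by linarith)

theorem tendsto_log_pow_mul_nEll_div_log {β ρ : ℝ} (hρ : 0 < ρ) {τ : ℕ → ℕ}
    (hτ : Tendsto (fun n : ℕ => (τ n : ℝ) / log n) atTop (nhds 0)) :
    Tendsto (fun n : ℕ => log (ρ ^ (τ n - 1) * nEll β n) / log n) atTop (nhds 1) := by
  have hpow : Tendsto (fun n : ℕ => ((τ n - 1 : ℕ) : ℝ) / log n) atTop (nhds 0) := by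
    refine squeeze_zero (fun n => by positivity) (fun n => ?_) hτ
    exact div_le_div_of_nonneg_right (by exact_mod_cast Nat.sub_le _ _) (log_natCast_nonneg n)
  have hlim := (hpow.mul_const (log ρ)).add
    (tendsto_log_div_log_of_div_natCast_tendsto_one (tendsto_nEll_div_natCast β))
  rw [zero_mul, zero_add] at hlim
  refine hlim.congr' ?_
  filter_upwards [eventually_nEll_pos β] with n hn
  rw [log_mul (pow_pos hρ _).ne' hn.ne', log_pow, add_div, div_mul_eq_mul_div]

theorem partial_renyi_sum_bound_general
    (μ : Measure (ℤ → 𝒳))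
    (H₁ : ℝ) (hH₁pos : 0 < H₁)
    (Hα : ℝ → ℝ)
    (hHα : ∀ α ∈ Set.Ioc (1 : ℝ) 2,
      Tendsto (fun t : ℕ => renyiH μ α t / t) atTop (nhds (Hα α)))
    (hHαconv : Tendsto Hα (nhdsWithin 1 (Set.Ioi 1)) (nhds H₁))
    (β : ℝ)
    (ρ : ℝ) (hρ : ρ ∈ Set.Ioo (0 : ℝ) 1)
    (τ : ℕ → ℕ)
    (hτ' : Tendsto (fun n : ℕ => (τ n : ℝ) / Real.log n) atTop (nhds 0))
    (η : ℝ) (hη : 0 < η) :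
    Tendsto (fun n : ℕ => (n : ℝ) *
        sSup {v : ℝ | ∃ t : ℕ, (1 + η) * Real.log n / H₁ < (t : ℝ) ∧
          v = ∑ x : Fin t → 𝒳, blockPmf μ 1 t x ^ 2 *
            (if blockPmf μ 1 t x ≤ (ρ ^ (τ n - 1) * ((n : ℝ) - (2 * (ell β n : ℝ) - 1)))⁻¹
              then 1 else 0)})
      atTop (nhds 0) := by
  obtain ⟨α, hHα_gt, hα⟩ : ∃ α, H₁ / (1 + η) < Hα α ∧ α ∈ Set.Ioc (1 : ℝ) 2 :=
    ((hHαconv.eventually (eventually_gt_nhds (div_lt_self hH₁pos (by linarith)))).and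
      (Ioc_mem_nhdsGT one_lt_two)).exists
  obtain ⟨G, hG₁, hG₂⟩ := exists_between hHα_gt
  have hG₀ : 0 < G := (div_pos hH₁pos (by linarith)).trans hG₁
  obtain ⟨T, hT⟩ := eventually_atTop.mp ((hHα α hα).eventually (eventually_gt_nhds hG₂))
  have hκ : 1 + (α - 2) < (α - 1) * G * (1 + η) / H₁ := by
    rw [div_lt_iff₀ (by linarith)] at hG₁
    rw [lt_div_iff₀ hH₁pos]
    nlinarith [hα.1]
  refine squeeze_zero' (Eventually.of_forall fun n => ?_) ?_ (tendsto_natCast_mul_rpow_mul_exp_neg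
    ((eventually_nEll_pos β).mono fun n hn => mul_pos (pow_pos hρ.1 _) hn)
    (tendsto_log_pow_mul_nEll_div_log hρ.1 hτ') hκ)
  · refine mul_nonneg n.cast_nonneg (Real.sSup_nonneg ?_)
    rintro _ ⟨t, -, rfl⟩
    exact Finset.sum_nonneg fun x _ => by positivity
  have hT_le : ∀ᶠ n : ℕ in atTop, (T : ℝ) ≤ (1 + η) * log n / H₁ :=
    ((tendsto_log_atTop.comp tendsto_natCast_atTop_atTop).const_mul_atTop (by linarith)
      |>.atTop_div_const hH₁pos).eventually_ge_atTop _
  filter_upwards [eventually_nEll_pos β, hT_le] with n hn hTn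
  have hc : 0 < ρ ^ (τ n - 1) * nEll β n := mul_pos (pow_pos hρ.1 _) hn
  refine mul_le_mul_of_nonneg_left (Real.sSup_le ?_ (by positivity)) n.cast_nonneg
  rintro _ ⟨t, ht, rfl⟩
  have ht₀ : (0 : ℝ) < t := lt_of_le_of_lt (by positivity) ht
  have hGt : G * t < renyiH μ α t :=
    (lt_div_iff₀ ht₀).mp (hT t (by exact_mod_cast hTn.trans ht.le))
  refine (sum_sq_blockPmf_mul_ite_le μ hα hc hGt).trans
    (mul_le_mul_of_nonneg_left (exp_le_exp.mpr (neg_le_neg ?_)) (by positivity))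
  calc (α - 1) * G * (1 + η) / H₁ * log n = (α - 1) * G * ((1 + η) * log n / H₁) := by ring
    _ ≤ (α - 1) * G * t := mul_le_mul_of_nonneg_left ht.le (mul_pos (sub_pos.mpr hα.1) hG₀).le

/-- Uniform bound on truncated second-moment sums of block probabilities
(Lemma: partial second-order Rényi sum bound). -/
theorem partial_renyi_sum_bound
    (μ : Measure (ℤ → 𝒳)) [IsProbabilityMeasure μ]
    (herg : Ergodic (shift (𝒳 := 𝒳)) μ)
    (H₁ : ℝ) (hH₁pos : 0 < H₁)
    (hH₁ : Tendsto (fun t : ℕ => shannonH μ t / t) atTop (nhds H₁))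
    (Hα : ℝ → ℝ)
    (hHα : ∀ α ∈ Set.Ioc (1 : ℝ) 2,
      Tendsto (fun t : ℕ => renyiH μ α t / t) atTop (nhds (Hα α)))
    (hHαconv : Tendsto Hα (nhdsWithin 1 (Set.Ioi 1)) (nhds H₁))
    (β : ℝ) (hβ : 0 < β)
    (ρ : ℝ) (hρ : ρ ∈ Set.Ioo (0 : ℝ) 1)
    (τ : ℕ → ℕ) (hτ : Tendsto τ atTop atTop)
    (hτ' : Tendsto (fun n : ℕ => (τ n : ℝ) / Real.log n) atTop (nhds 0))
    (η : ℝ) (hη : 0 < η) :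
    Tendsto (fun n : ℕ => (n : ℝ) *
        sSup {v : ℝ | ∃ t : ℕ, (1 + η) * Real.log n / H₁ < (t : ℝ) ∧
          v = ∑ x : Fin t → 𝒳, blockPmf μ 1 t x ^ 2 *
            (if blockPmf μ 1 t x ≤ (ρ ^ (τ n - 1) * ((n : ℝ) - (2 * (ell β n : ℝ) - 1)))⁻¹
              then 1 else 0)})
      atTop (nhds 0) :=
  partial_renyi_sum_bound_general μ H₁ hH₁pos Hα hHα hHαconv β ρ hρ τ hτ' η hη

end
end

section
/- Let μ be a stationary ergodic measure on 𝒳^ℤ with strong mixing coefficients satisfying ∑_{s=1}^∞ d(s) < ∞, with sup_{s≥1} μ(X₁ = X_{1+s}) < 1, and whose entropy rate satisfies 0 < ℋ₁ < ∞. Then for every η > 0 and β > 0: lim_{n→∞} (log n) · sup{ μ(X₁^t = X_{1+s}^{t+s}) : s, t ∈ ℕ, 1 ≤ s ≤ ℓ(n), (1+η)(log n)/ℋ₁ ≤ t ≤ β·log n } = 0 (with the convention that the supremum over the empty set is 0). Here X₁^t = X_{1+s}^{t+s} denotes the event that X_i = X_{i+s} for all 1 ≤ i ≤ t. -/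
open MeasureTheory Filter Real

/-!
If `X_i = X_{i+s}` for `1 ≤ i ≤ t`, the word `X_1^{t+s}` has period `s`, so the block `X_1^u`
reappears `k s ∈ (2u, 2u + s]` positions later. For `3u ≤ t` the two copies are separated by a
gap of length at least `u`, so by strong mixing the probability of a repetition is at most
`M(u) + d(u)`, where `M(u)` is the largest probability of a single `u`-block.

Summability and monotonicity of `d` give `u d(u) → 0` (Cauchy condensation). For `M`, mixing
across a gap `g` gives `M(2m + g) ≤ M(m) (M(m) + d(g))`, and aperiodicity together with the
pigeonhole principle gives `M(|𝒳| + 1) ≤ c < 1`. Iterating the quadratic recursion along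
`m ↦ 2m + g` makes `M` decay faster than the orbit grows, so `u M(u) → 0` too. Taking
`u ≍ log n` proves the theorem.
-/

open scoped Topology

lemma tendsto_nat_mul_of_tendsto_two_pow_mul {f : ℕ → ℝ} (hf : ∀ n, 0 ≤ f n)
    (hanti : Antitone f) {K : ℕ} (hK : 0 < K)
    (h : Tendsto (fun r : ℕ => (2 : ℝ) ^ r * f (K * 2 ^ r)) atTop (𝓝 0)) :
    Tendsto (fun n : ℕ => (n : ℝ) * f n) atTop (𝓝 0) := by
  set j : ℕ → ℕ := fun n => Nat.log 2 (n / K)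
  have hj : Tendsto j atTop atTop := tendsto_atTop_atTop.2 fun J =>
    ⟨K * 2 ^ J, fun n hn => Nat.le_log_of_pow_le one_lt_two
      ((Nat.le_div_iff_mul_le hK).2 (by rwa [mul_comm]))⟩
  have hbound : ∀ n ≥ K, (n : ℝ) * f n ≤ 2 * K * (2 ^ j n * f (K * 2 ^ j n)) := by
    intro n hn
    have hlow : K * 2 ^ j n ≤ n := (Nat.mul_le_mul_left K
      (Nat.pow_log_le_self 2 (Nat.div_pos hn hK).ne')).trans (Nat.mul_div_le n K)
    have hup : n ≤ 2 * K * 2 ^ j n := by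
      have := (Nat.div_lt_iff_lt_mul hK).1 (Nat.lt_pow_succ_log_self one_lt_two (n / K))
      rw [pow_succ] at this
      linarith
    calc (n : ℝ) * f n ≤ (2 * K * 2 ^ j n : ℕ) * f (K * 2 ^ j n) :=
          mul_le_mul (by exact_mod_cast hup) (hanti hlow) (hf n) (Nat.cast_nonneg _)
      _ = 2 * K * (2 ^ j n * f (K * 2 ^ j n)) := by push_cast; ring
  refine squeeze_zero' (Eventually.of_forall fun n => mul_nonneg n.cast_nonneg (hf n))
    ((eventually_ge_atTop K).mono hbound) ?_
  simpa using (h.comp hj).const_mul (2 * K : ℝ)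

lemma tendsto_nat_mul_of_summable_of_antitone {f : ℕ → ℝ} (hf : ∀ n, 0 ≤ f n)
    (hanti : Antitone f) (hsum : Summable f) :
    Tendsto (fun n : ℕ => (n : ℝ) * f n) atTop (𝓝 0) := by
  have hcond := (summable_condensed_iff_of_nonneg hf fun _ _ _ hmn => hanti hmn).2 hsum
  exact tendsto_nat_mul_of_tendsto_two_pow_mul hf hanti one_pos
    (by simpa using hcond.tendsto_atTop_zero)

lemma iterate_two_mul_add_add (g m r : ℕ) :
    (fun k => 2 * k + g)^[r] m + g = 2 ^ r * (m + g) := by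
  induction r with
  | zero => simp
  | succ r ih => rw [Function.iterate_succ_apply', pow_succ]; linarith

lemma le_mul_pow_of_le_mul_add {f : ℕ → ℝ} (hf : ∀ n, 0 ≤ f n) {g : ℕ} {γ ρ : ℝ}
    (hrec : ∀ m, f (2 * m + g) ≤ f m * (f m + γ)) {m : ℕ} (hm : f m + γ ≤ ρ)
    (hρ₀ : 0 ≤ ρ) (hρ₁ : ρ ≤ 1) (r : ℕ) :
    f ((fun k => 2 * k + g)^[r] m) ≤ f m * ρ ^ r := by
  induction r with
  | zero => simp
  | succ r ih =>
    set N := (fun k => 2 * k + g)^[r] m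
    have hN : f N ≤ f m := ih.trans (mul_le_of_le_one_right (hf m) (pow_le_one₀ hρ₀ hρ₁))
    calc f ((fun k => 2 * k + g)^[r + 1] m) = f (2 * N + g) := by
          rw [Function.iterate_succ_apply']
      _ ≤ f N * (f N + γ) := hrec N
      _ ≤ f N * ρ := mul_le_mul_of_nonneg_left (by linarith) (hf N)
      _ ≤ f m * ρ ^ r * ρ := mul_le_mul_of_nonneg_right ih hρ₀
      _ = f m * ρ ^ (r + 1) := by ring

lemma tendsto_nat_mul_of_le_mul_add {f : ℕ → ℝ} (hf : ∀ n, 0 ≤ f n) (hanti : Antitone f)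
    {g m₀ : ℕ} {γ : ℝ} (hγ : γ < 1 / 2) (hrec : ∀ m, f (2 * m + g) ≤ f m * (f m + γ))
    (hbase : f m₀ + γ < 1) :
    Tendsto (fun n : ℕ => (n : ℝ) * f n) atTop (𝓝 0) := by
  -- Along the orbit of `φ`, `f` first decays geometrically at some rate `ρ₁ < 1` until
  -- `f + γ < 1/2`; from there on it decays at a rate `ρ < 1/2`, which beats the doubling of `φ`.
  set φ : ℕ → ℕ := fun k => 2 * k + g
  obtain ⟨ρ₁, hρ₁, hρ₁_lt⟩ := exists_between (max_lt hbase one_pos)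
  obtain ⟨ρ, hρ, hρ_lt⟩ := exists_between (max_lt hγ one_half_pos)
  obtain ⟨j, hj⟩ : ∃ j, f (φ^[j] m₀) + γ ≤ ρ := by
    have hlim : Tendsto (fun j => f m₀ * ρ₁ ^ j) atTop (𝓝 0) := by
      simpa using (tendsto_pow_atTop_nhds_zero_of_lt_one (le_of_max_le_right hρ₁.le)
        hρ₁_lt).const_mul (f m₀)
    obtain ⟨j, hj⟩ := (hlim.eventually (ge_mem_nhds
      (show 0 < ρ - γ by linarith [le_max_left γ 0]))).exists
    have := le_mul_pow_of_le_mul_add hf hrec (le_of_max_le_left hρ₁.le)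
      (le_of_max_le_right hρ₁.le) hρ₁_lt.le j
    exact ⟨j, by linarith⟩
  set m₁ := φ^[j] m₀
  have hdecay : Tendsto (fun r : ℕ => f m₁ * (2 * ρ) ^ r) atTop (𝓝 0) := by
    simpa using (tendsto_pow_atTop_nhds_zero_of_lt_one (by linarith [le_max_right γ 0])
      (by linarith)).const_mul (f m₁)
  refine tendsto_nat_mul_of_tendsto_two_pow_mul hf hanti (K := m₁ + g + 1) (by omega)
    (squeeze_zero (fun r => mul_nonneg (by positivity) (hf _)) (fun r => ?_) hdecay)
  have hle : φ^[r] m₁ ≤ (m₁ + g + 1) * 2 ^ r := by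
    have := iterate_two_mul_add_add g m₁ r
    nlinarith [Nat.one_le_two_pow (n := r)]
  calc (2 : ℝ) ^ r * f ((m₁ + g + 1) * 2 ^ r) ≤ 2 ^ r * (f m₁ * ρ ^ r) := by
        gcongr
        exact (hanti hle).trans (le_mul_pow_of_le_mul_add hf hrec (by linarith)
          (by linarith [le_max_right γ 0]) (by linarith) r)
    _ = f m₁ * (2 * ρ) ^ r := by ring

lemma tendsto_log_mul_comp_floor {B : ℕ → ℝ} (hB₀ : ∀ u, 0 ≤ B u)
    (hB : Tendsto (fun u : ℕ => (u : ℝ) * B u) atTop (𝓝 0)) {a : ℝ} (ha : 0 < a) :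
    Tendsto (fun n : ℕ => Real.log n * B ⌊a * Real.log n⌋₊) atTop (𝓝 0) := by
  have hlog : Tendsto (fun n : ℕ => a * Real.log n) atTop atTop :=
    (tendsto_log_atTop.comp tendsto_natCast_atTop_atTop).const_mul_atTop ha
  have hlim := (hB.comp (tendsto_nat_floor_atTop.comp hlog)).const_mul (2 / a)
  rw [mul_zero] at hlim
  refine squeeze_zero' (Eventually.of_forall fun n =>
    mul_nonneg (Real.log_natCast_nonneg n) (hB₀ _)) ?_ hlim
  filter_upwards [hlog.eventually_ge_atTop 2] with n hn
  have hfloor := Nat.lt_floor_add_one (a * Real.log n)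
  have hle : Real.log n ≤ 2 / a * ⌊a * Real.log n⌋₊ := by
    rw [div_mul_eq_mul_div, le_div_iff₀ ha]
    linarith
  calc Real.log n * B ⌊a * Real.log n⌋₊ ≤ 2 / a * ⌊a * Real.log n⌋₊ * B ⌊a * Real.log n⌋₊ :=
        mul_le_mul_of_nonneg_right hle (hB₀ _)
    _ = _ := by simp only [Function.comp]; ring

section Blocks

variable {𝒳 : Type*}

lemma shift_iterate_apply (m : ℕ) (ω : ℤ → 𝒳) (j : ℤ) : shift^[m] ω j = ω (j + m) := by
  induction m generalizing ω with
  | zero => simp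
  | succ m ih =>
    rw [Function.iterate_succ_apply, ih]
    simp only [shift]
    push_cast
    ring_nf

def blockSet (a : ℤ) (t : ℕ) (x : Fin t → 𝒳) : Set (ℤ → 𝒳) :=
  {ω | ∀ i : Fin t, ω (a + ((i : ℕ) : ℤ)) = x i}

lemma shift_iterate_preimage_blockSet (m : ℕ) (a : ℤ) (t : ℕ) (x : Fin t → 𝒳) :
    shift^[m] ⁻¹' blockSet a t x = blockSet (a + m) t x := by
  ext ω
  simp only [blockSet, Set.mem_preimage, Set.mem_ofPred_eq, shift_iterate_apply, add_right_comm]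

lemma blockSet_disjoint {a : ℤ} {t : ℕ} {x y : Fin t → 𝒳} (hxy : x ≠ y) :
    Disjoint (blockSet a t x) (blockSet a t y) :=
  Set.disjoint_left.2 fun _ hx hy => hxy (funext fun i => (hx i).symm.trans (hy i))

variable [MeasurableSpace 𝒳] [MeasurableSingletonClass 𝒳]

lemma measurableSet_blockSet_comap {p : ℤ → Prop} {a : ℤ} {t : ℕ} (x : Fin t → 𝒳)
    (hp : ∀ i : Fin t, p (a + i)) :
    MeasurableSet[MeasurableSpace.comap (fun ω (j : {j : ℤ // p j}) => ω j) inferInstance]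
      (blockSet a t x) := by
  rw [blockSet, Set.ofPred_forall]
  exact MeasurableSet.iInter fun i =>
    ⟨{y | y ⟨a + i, hp i⟩ = x i}, measurable_pi_apply _ (measurableSet_singleton _), rfl⟩

lemma measurableSet_blockSet (a : ℤ) (t : ℕ) (x : Fin t → 𝒳) :
    MeasurableSet (blockSet a t x) := by
  rw [blockSet, Set.ofPred_forall]
  exact MeasurableSet.iInter fun i => measurable_pi_apply _ (measurableSet_singleton _)

lemma measurableSet_blockSet_past {a i : ℤ} {t : ℕ} (x : Fin t → 𝒳) (h : a + t ≤ i + 1) :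
    MeasurableSet[pastSigma 𝒳 i] (blockSet a t x) :=
  measurableSet_blockSet_comap x fun k => by omega

lemma measurableSet_blockSet_future {a i : ℤ} {t : ℕ} (x : Fin t → 𝒳) (h : i ≤ a) :
    MeasurableSet[futureSigma 𝒳 i] (blockSet a t x) :=
  measurableSet_blockSet_comap x fun k => by omega

variable {μ : Measure (ℤ → 𝒳)}

lemma blockPmf_add_nat (hμ : MeasurePreserving shift μ μ) (a : ℤ) (m t : ℕ)
    (x : Fin t → 𝒳) : blockPmf μ (a + m) t x = blockPmf μ a t x := by
  change (μ (blockSet (a + m) t x)).toReal = (μ (blockSet a t x)).toReal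
  rw [← shift_iterate_preimage_blockSet,
    (hμ.iterate m).measure_preimage (measurableSet_blockSet a t x).nullMeasurableSet]

lemma measure_coord_eq_add_nat [Countable 𝒳] (hμ : MeasurePreserving shift μ μ) (a b : ℤ)
    (m : ℕ) : μ {ω | ω (a + m) = ω (b + m)} = μ {ω | ω a = ω b} := by
  have hpre : shift^[m] ⁻¹' {ω : ℤ → 𝒳 | ω a = ω b} = {ω | ω (a + m) = ω (b + m)} := by
    ext ω
    simp only [Set.mem_preimage, Set.mem_ofPred_eq, shift_iterate_apply]
  rw [← hpre, (hμ.iterate m).measure_preimage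
    (measurableSet_eq_fun (measurable_pi_apply a) (measurable_pi_apply b)).nullMeasurableSet]

lemma sum_blockPmf_le_one [Fintype 𝒳] [IsProbabilityMeasure μ] (a : ℤ) (t : ℕ) :
    ∑ x : Fin t → 𝒳, blockPmf μ a t x ≤ 1 := by
  have h := sum_measure_le_measure_univ (μ := μ) (s := Finset.univ)
    (fun x _ => (measurableSet_blockSet a t x).nullMeasurableSet)
    (fun x _ y _ hxy => (blockSet_disjoint hxy).aedisjoint)
  rw [measure_univ] at h
  calc ∑ x : Fin t → 𝒳, blockPmf μ a t x
      = (∑ x : Fin t → 𝒳, μ (blockSet a t x)).toReal :=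
        (ENNReal.toReal_sum fun _ _ => measure_ne_top μ _).symm
    _ ≤ 1 := ENNReal.toReal_le_of_le_ofReal zero_le_one (by simpa using h)

end Blocks

section Mixing

variable {𝒳 : Type*} [MeasurableSpace 𝒳] {μ : Measure (ℤ → 𝒳)}

lemma futureSigma_anti {i j : ℤ} (h : i ≤ j) : futureSigma 𝒳 j ≤ futureSigma 𝒳 i := by
  set res := fun (y : {k : ℤ // i ≤ k} → 𝒳) (k : {k : ℤ // j ≤ k}) => y ⟨k, h.trans k.2⟩
  have hres : Measurable res := measurable_pi_lambda _ fun k => measurable_pi_apply _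
  calc futureSigma 𝒳 j
      = (MeasurableSpace.comap res inferInstance).comap fun ω (k : {k : ℤ // i ≤ k}) => ω k :=
        by rw [MeasurableSpace.comap_comp]; rfl
    _ ≤ futureSigma 𝒳 i := MeasurableSpace.comap_mono hres.comap_le

lemma mixCoef_nonneg (s : ℕ) : 0 ≤ mixCoef μ s :=
  Real.sSup_nonneg (by rintro _ ⟨-, -, -, -, -, -, rfl⟩; positivity)

variable [IsProbabilityMeasure μ]

lemma abs_div_sub_le_mixCoef {i : ℤ} {s : ℕ} {E F : Set (ℤ → 𝒳)}
    (hE : MeasurableSet[pastSigma 𝒳 i] E) (hF : MeasurableSet[futureSigma 𝒳 (i + s)] F)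
    (h0 : μ E ≠ 0) : |(μ (F ∩ E)).toReal / (μ E).toReal - (μ F).toReal| ≤ mixCoef μ s := by
  refine le_csSup ⟨1, ?_⟩ ⟨i, E, F, hE, hF, h0, rfl⟩
  rintro _ ⟨-, E, F, -, -, -, rfl⟩
  have hcond : (μ (F ∩ E)).toReal / (μ E).toReal ≤ 1 :=
    div_le_one_of_le₀ (measureReal_mono Set.inter_subset_right) ENNReal.toReal_nonneg
  have hF1 : (μ F).toReal ≤ 1 := measureReal_le_one
  rw [abs_sub_le_iff]
  constructor <;> linarith [ENNReal.toReal_nonneg (a := μ F),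
    div_nonneg (ENNReal.toReal_nonneg (a := μ (F ∩ E))) (ENNReal.toReal_nonneg (a := μ E))]

lemma measure_inter_le_mixCoef {i : ℤ} {s : ℕ} {E F : Set (ℤ → 𝒳)}
    (hE : MeasurableSet[pastSigma 𝒳 i] E) (hF : MeasurableSet[futureSigma 𝒳 (i + s)] F) :
    (μ (F ∩ E)).toReal ≤ ((μ F).toReal + mixCoef μ s) * (μ E).toReal := by
  rcases eq_or_ne (μ E) 0 with h0 | h0
  · simp [measure_mono_null Set.inter_subset_right h0, h0]
  have hE_pos : 0 < (μ E).toReal := ENNReal.toReal_pos h0 (measure_ne_top μ E)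
  have hcond := (abs_sub_le_iff.1 (abs_div_sub_le_mixCoef hE hF h0)).1
  rw [← div_le_iff₀ hE_pos]
  linarith

lemma mixCoef_antitone : Antitone (mixCoef μ) := by
  intro s s' hss'
  refine Real.sSup_le ?_ (mixCoef_nonneg s)
  rintro _ ⟨i, E, F, hE, hF, h0, rfl⟩
  exact abs_div_sub_le_mixCoef hE (futureSigma_anti (by omega) _ hF) h0

end Mixing

section MaxBlock

variable {𝒳 : Type*} [MeasurableSpace 𝒳] {μ : Measure (ℤ → 𝒳)}

noncomputable def maxBlockPmf (μ : Measure (ℤ → 𝒳)) (t : ℕ) : ℝ :=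
  ⨆ x : Fin t → 𝒳, blockPmf μ 1 t x

lemma blockPmf_le_maxBlockPmf [Finite 𝒳] (t : ℕ) (x : Fin t → 𝒳) :
    blockPmf μ 1 t x ≤ maxBlockPmf μ t :=
  le_ciSup (Set.finite_range _).bddAbove x

lemma maxBlockPmf_nonneg (t : ℕ) : 0 ≤ maxBlockPmf μ t :=
  Real.iSup_nonneg fun _ => ENNReal.toReal_nonneg

lemma maxBlockPmf_antitone [Finite 𝒳] [IsFiniteMeasure μ] : Antitone (maxBlockPmf μ) := by
  intro t t' htt'
  refine Real.iSup_le (fun x => ?_) (maxBlockPmf_nonneg t)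
  have hsub : blockSet 1 t' x ⊆ blockSet 1 t fun i => x (Fin.castLE htt' i) :=
    fun ω hω i => hω (Fin.castLE htt' i)
  exact (measureReal_mono hsub).trans (blockPmf_le_maxBlockPmf t _)

lemma maxBlockPmf_card_add_one_le [Fintype 𝒳] [MeasurableSingletonClass 𝒳] [IsFiniteMeasure μ]
    (hμ : MeasurePreserving shift μ μ) {c : ℝ}
    (hc : ∀ s : ℕ, 1 ≤ s → (μ {ω | ω 1 = ω (1 + (s : ℤ))}).toReal ≤ c) :
    maxBlockPmf μ (Fintype.card 𝒳 + 1) ≤ c := by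
  refine Real.iSup_le (fun x => ?_) (ENNReal.toReal_nonneg.trans (hc 1 le_rfl))
  obtain ⟨i, j, hij, hx⟩ := Fintype.exists_ne_map_eq_of_card_lt x (by simp)
  wlog hlt : i < j generalizing i j
  · exact this j i hij.symm hx.symm (hij.lt_or_gt.resolve_left hlt)
  obtain ⟨s, hs⟩ : ∃ s : ℕ, (j : ℕ) = i + s := Nat.exists_eq_add_of_le hlt.le
  have hsub : blockSet 1 _ x ⊆ {ω | ω (1 + (i : ℕ)) = ω (1 + s + (i : ℕ))} := fun ω hω => by
    rw [Set.mem_ofPred_eq, hω i, show (1 : ℤ) + s + (i : ℕ) = 1 + (j : ℕ) by omega, hω j, hx]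
  calc blockPmf μ 1 _ x ≤ (μ {ω | ω (1 + (i : ℕ)) = ω (1 + s + (i : ℕ))}).toReal :=
        measureReal_mono hsub
    _ = (μ {ω | ω 1 = ω (1 + s)}).toReal := by rw [measure_coord_eq_add_nat hμ]
    _ ≤ c := hc s (by omega)

variable [Fintype 𝒳] [MeasurableSingletonClass 𝒳] [IsProbabilityMeasure μ]

lemma maxBlockPmf_add_add_le (hμ : MeasurePreserving shift μ μ) (a g b : ℕ) :
    maxBlockPmf μ (a + g + b) ≤ maxBlockPmf μ a * (maxBlockPmf μ b + mixCoef μ g) := by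
  refine Real.iSup_le (fun x => ?_)
    (mul_nonneg (maxBlockPmf_nonneg a) (add_nonneg (maxBlockPmf_nonneg b) (mixCoef_nonneg g)))
  set head : Fin a → 𝒳 := fun i => x (Fin.castLE (by omega) i)
  set tail : Fin b → 𝒳 := fun i => x (Fin.natAdd (a + g) i)
  have hsub : blockSet 1 (a + g + b) x ⊆
      blockSet (1 + ((a + g : ℕ) : ℤ)) b tail ∩ blockSet 1 a head := fun ω hω =>
    ⟨fun i => by simpa [add_assoc] using hω (Fin.natAdd (a + g) i), fun i => hω (Fin.castLE _ i)⟩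
  have hmix := measure_inter_le_mixCoef (μ := μ) (i := a) (s := g)
    (measurableSet_blockSet_past (a := 1) head (by omega))
    (measurableSet_blockSet_future (a := 1 + ((a + g : ℕ) : ℤ)) tail (by push_cast; omega))
  calc blockPmf μ 1 (a + g + b) x
      ≤ (μ (blockSet (1 + ((a + g : ℕ) : ℤ)) b tail ∩ blockSet 1 a head)).toReal :=
        measureReal_mono hsub
    _ ≤ (blockPmf μ 1 b tail + mixCoef μ g) * blockPmf μ 1 a head := by
        rw [← blockPmf_add_nat hμ 1 (a + g)]
        exact hmix
    _ ≤ (maxBlockPmf μ b + mixCoef μ g) * maxBlockPmf μ a :=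
        mul_le_mul (add_le_add_left (blockPmf_le_maxBlockPmf b tail) _)
          (blockPmf_le_maxBlockPmf a head) ENNReal.toReal_nonneg
          (add_nonneg (maxBlockPmf_nonneg b) (mixCoef_nonneg g))
    _ = maxBlockPmf μ a * (maxBlockPmf μ b + mixCoef μ g) := mul_comm _ _

lemma measure_shifted_block_eq_le (hμ : MeasurePreserving shift μ μ) (u q : ℕ) :
    (μ {ω | ∀ i : Fin u, ω (1 + ((u + q : ℕ) : ℤ) + (i : ℕ)) = ω (1 + (i : ℕ))}).toReal ≤
      maxBlockPmf μ u + mixCoef μ q := by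
  have hsub : {ω | ∀ i : Fin u, ω (1 + ((u + q : ℕ) : ℤ) + (i : ℕ)) = ω (1 + (i : ℕ))} ⊆
      ⋃ x : Fin u → 𝒳, blockSet (1 + ((u + q : ℕ) : ℤ)) u x ∩ blockSet 1 u x :=
    fun ω hω => Set.mem_iUnion.2 ⟨fun i => ω (1 + (i : ℕ)), hω, fun _ => rfl⟩
  calc _ ≤ ∑ x : Fin u → 𝒳, (μ (blockSet (1 + ((u + q : ℕ) : ℤ)) u x ∩ blockSet 1 u x)).toReal :=
        (measureReal_mono hsub).trans (measureReal_iUnion_fintype_le _)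
    _ ≤ ∑ x : Fin u → 𝒳, (maxBlockPmf μ u + mixCoef μ q) * blockPmf μ 1 u x := by
        gcongr with x
        calc _ ≤ (blockPmf μ (1 + ((u + q : ℕ) : ℤ)) u x + mixCoef μ q) * blockPmf μ 1 u x :=
              measure_inter_le_mixCoef (i := u)
                (measurableSet_blockSet_past x (by omega))
                (measurableSet_blockSet_future x (by push_cast; omega))
          _ ≤ (maxBlockPmf μ u + mixCoef μ q) * blockPmf μ 1 u x := by
              rw [blockPmf_add_nat hμ]
              gcongr
              · exact ENNReal.toReal_nonneg
              · exact blockPmf_le_maxBlockPmf u x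
    _ ≤ maxBlockPmf μ u + mixCoef μ q := by
        rw [← Finset.mul_sum]
        exact mul_le_of_le_one_right (add_nonneg (maxBlockPmf_nonneg u) (mixCoef_nonneg q))
          (sum_blockPmf_le_one 1 u)

end MaxBlock

section Repetition

variable {𝒳 : Type*}

lemma eq_add_mul_of_forall_eq_add {ω : ℤ → 𝒳} {s t : ℕ}
    (h : ∀ i : ℕ, 1 ≤ i → i ≤ t → ω i = ω ((i : ℤ) + (s : ℤ))) (k : ℕ) {i : ℕ} (hi : 1 ≤ i)
    (hik : i + k * s ≤ t + s) : ω i = ω ((i : ℤ) + ((k * s : ℕ) : ℤ)) := by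
  induction k with
  | zero => simp
  | succ k ih =>
    rw [Nat.succ_mul] at hik ⊢
    have hstep := h (i + k * s) (by omega) (by omega)
    rw [ih (by omega)]
    push_cast at hstep ⊢
    rw [hstep, add_assoc]

variable [Fintype 𝒳] [MeasurableSpace 𝒳] [MeasurableSingletonClass 𝒳]
  {μ : Measure (ℤ → 𝒳)} [IsProbabilityMeasure μ]

lemma measure_periodic_le (hμ : MeasurePreserving shift μ μ) {s t u : ℕ} (hs : 1 ≤ s)
    (ht : 3 * u ≤ t) :
    (μ {ω | ∀ i : ℕ, 1 ≤ i → i ≤ t → ω i = ω ((i : ℤ) + (s : ℤ))}).toReal ≤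
      maxBlockPmf μ u + mixCoef μ u := by
  -- the first multiple of the period beyond `2 u`, so that the gap between the blocks is `≥ u`
  set k := 2 * u / s + 1
  have hks : k * s = 2 * u / s * s + s := by rw [Nat.succ_mul]
  have hlow : 2 * u < k * s := hks ▸ Nat.lt_div_mul_add hs
  have hupp : k * s ≤ 2 * u + s := hks ▸ Nat.add_le_add_right (Nat.div_mul_le_self _ _) s
  obtain ⟨q, hq⟩ : ∃ q, k * s = u + q := ⟨k * s - u, by omega⟩
  have hsub : {ω : ℤ → 𝒳 | ∀ i : ℕ, 1 ≤ i → i ≤ t → ω i = ω ((i : ℤ) + (s : ℤ))} ⊆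
      {ω | ∀ i : Fin u, ω (1 + ((u + q : ℕ) : ℤ) + (i : ℕ)) = ω (1 + (i : ℕ))} := by
    intro ω hω i
    have := eq_add_mul_of_forall_eq_add hω k (i := 1 + i) (by omega) (by omega)
    rw [hq] at this
    push_cast at this ⊢
    rw [this]
    ring_nf
  calc _ ≤ _ := measureReal_mono hsub
    _ ≤ maxBlockPmf μ u + mixCoef μ q := measure_shifted_block_eq_le hμ u q
    _ ≤ maxBlockPmf μ u + mixCoef μ u := add_le_add_right (mixCoef_antitone (show u ≤ q by omega)) _

lemma tendsto_nat_mul_maxBlockPmf_add_mixCoef (hμ : MeasurePreserving shift μ μ)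
    (hmix : Summable (mixCoef μ)) {c : ℝ} (hc₁ : c < 1)
    (hc : ∀ s : ℕ, 1 ≤ s → (μ {ω | ω 1 = ω (1 + (s : ℤ))}).toReal ≤ c) :
    Tendsto (fun u : ℕ => (u : ℝ) * (maxBlockPmf μ u + mixCoef μ u)) atTop (𝓝 0) := by
  obtain ⟨g, hg⟩ : ∃ g, mixCoef μ g < min (1 / 2) (1 - c) :=
    (hmix.tendsto_atTop_zero.eventually (gt_mem_nhds (lt_min one_half_pos (by linarith)))).exists
  have hM := tendsto_nat_mul_of_le_mul_add maxBlockPmf_nonneg maxBlockPmf_antitone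
    (hg.trans_le (min_le_left _ _))
    (fun m => by rw [two_mul, add_right_comm]; exact maxBlockPmf_add_add_le hμ m g m)
    (by linarith [maxBlockPmf_card_add_one_le hμ hc, min_le_right (1 / 2 : ℝ) (1 - c)])
  have hd := tendsto_nat_mul_of_summable_of_antitone mixCoef_nonneg mixCoef_antitone hmix
  simpa [mul_add] using hM.add hd

lemma sSup_measure_periodic_le (hμ : MeasurePreserving shift μ μ) (p q : ℕ → Prop) {T : ℝ}
    {u : ℕ} (hu : 3 * (u : ℝ) ≤ T) :
    sSup {v : ℝ | ∃ s t : ℕ, 1 ≤ s ∧ p s ∧ T ≤ (t : ℝ) ∧ q t ∧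
      v = (μ {ω | ∀ i : ℕ, 1 ≤ i → i ≤ t → ω ((i : ℤ)) = ω ((i : ℤ) + (s : ℤ))}).toReal} ≤
      maxBlockPmf μ u + mixCoef μ u := by
  refine Real.sSup_le ?_ (add_nonneg (maxBlockPmf_nonneg u) (mixCoef_nonneg u))
  rintro _ ⟨s, t, hs, -, ht, -, rfl⟩
  exact measure_periodic_le hμ hs (by exact_mod_cast hu.trans ht)

end Repetition

section

variable {𝒳 : Type*} [Fintype 𝒳] [MeasurableSpace 𝒳] [MeasurableSingletonClass 𝒳]

theorem repetition_probability_bound_general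
    (μ : Measure (ℤ → 𝒳)) [IsProbabilityMeasure μ]
    (herg : Ergodic (shift (𝒳 := 𝒳)) μ)
    -- summable strong mixing coefficients
    (hmix : Summable fun s : ℕ => mixCoef μ (s + 1))
    -- aperiodicity: sup_{s ≥ 1} μ(X₁ = X_{1+s}) < 1
    (hrec : ∃ c < (1 : ℝ), ∀ s : ℕ, 1 ≤ s → (μ {ω | ω 1 = ω (1 + (s : ℤ))}).toReal ≤ c)
    -- the entropy rate exists, is finite and positive
    (H₁ : ℝ) (hH₁pos : 0 < H₁)
    (η β : ℝ) (hη : 0 < η) :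
    Tendsto (fun n : ℕ => Real.log n *
        sSup {v : ℝ | ∃ s t : ℕ, 1 ≤ s ∧ s ≤ ell β n ∧
          (1 + η) * Real.log n / H₁ ≤ (t : ℝ) ∧ (t : ℝ) ≤ β * Real.log n ∧
          v = (μ {ω | ∀ i : ℕ, 1 ≤ i → i ≤ t →
            ω ((i : ℤ)) = ω ((i : ℤ) + (s : ℤ))}).toReal})
      atTop (nhds 0) := by
  obtain ⟨c, hc₁, hc⟩ := hrec
  have hμ := herg.toMeasurePreserving
  have hB := tendsto_nat_mul_maxBlockPmf_add_mixCoef hμ ((summable_nat_add_iff 1).1 hmix) hc₁ hc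
  set a := (1 + η) / (3 * H₁)
  have ha : 0 < a := div_pos (by linarith) (by positivity)
  have hlim := tendsto_log_mul_comp_floor
    (fun u => add_nonneg (maxBlockPmf_nonneg u) (mixCoef_nonneg u)) hB ha
  refine squeeze_zero (fun n => mul_nonneg (Real.log_natCast_nonneg n) (Real.sSup_nonneg ?_))
    (fun n => mul_le_mul_of_nonneg_left (sSup_measure_periodic_le hμ _ _ ?_)
      (Real.log_natCast_nonneg n)) hlim
  · rintro _ ⟨s, t, -, -, -, -, rfl⟩
    exact ENNReal.toReal_nonneg
  calc 3 * (⌊a * Real.log n⌋₊ : ℝ) ≤ 3 * (a * Real.log n) := by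
        gcongr
        exact Nat.floor_le (mul_nonneg ha.le (Real.log_natCast_nonneg n))
    _ = (1 + η) * Real.log n / H₁ := by simp only [a]; field_simp

/-- Uniform bound on repetition probabilities
(Lemma: matching probability). -/
theorem repetition_probability_bound
    (μ : Measure (ℤ → 𝒳)) [IsProbabilityMeasure μ]
    (herg : Ergodic (shift (𝒳 := 𝒳)) μ)
    -- summable strong mixing coefficients
    (hmix : Summable fun s : ℕ => mixCoef μ (s + 1))
    -- aperiodicity: sup_{s ≥ 1} μ(X₁ = X_{1+s}) < 1
    (hrec : ∃ c < (1 : ℝ), ∀ s : ℕ, 1 ≤ s → (μ {ω | ω 1 = ω (1 + (s : ℤ))}).toReal ≤ c)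
    -- the entropy rate exists, is finite and positive
    (H₁ : ℝ) (hH₁pos : 0 < H₁)
    (hH₁ : Tendsto (fun t : ℕ => shannonH μ t / t) atTop (nhds H₁))
    (η β : ℝ) (hη : 0 < η) (hβ : 0 < β) :
    Tendsto (fun n : ℕ => Real.log n *
        sSup {v : ℝ | ∃ s t : ℕ, 1 ≤ s ∧ s ≤ ell β n ∧
          (1 + η) * Real.log n / H₁ ≤ (t : ℝ) ∧ (t : ℝ) ≤ β * Real.log n ∧
          v = (μ {ω | ∀ i : ℕ, 1 ≤ i → i ≤ t →
            ω ((i : ℤ)) = ω ((i : ℤ) + (s : ℤ))}).toReal})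
      atTop (nhds 0) :=
  repetition_probability_bound_general μ herg hmix hrec H₁ hH₁pos η β hη

end
end
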